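/- arXiv:math/0306008 — 8 statements merged into one kernel-verified Lean document; each statement's English description precedes it below -/
import Mathlib

section
/- Euler's constant equals γ = ∫_1^∞ Σ_{n=1}^∞ 1/((t+n-1)^2(t+n)) dt. -/
/-!
For `c > 0` the function `t ↦ 1 / ((t + c - 1) ^ 2 * (t + c))` has the primitive
`log (t + c) - log (t + c - 1) - (t + c - 1)⁻¹`, which tends to `0` at infinity, so its integral
over `(1, ∞)` is `1 / c - (log (c + 1) - log c)`. For `c = n` this is the increment
`eulerMascheroniSeq n - eulerMascheroniSeq (n - 1)`, so these integrals sum to `γ`. All integrands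
are nonnegative, which justifies exchanging the sum and the integral.
-/

open Real MeasureTheory Set Filter
open scoped Topology

lemma hasDerivAt_log_add_one_sub_log_sub_inv {s : ℝ} (hs : 0 < s) :
    HasDerivAt (fun s ↦ log (s + 1) - log s - s⁻¹) (1 / (s ^ 2 * (s + 1))) s := by
  have hlog : HasDerivAt (fun s ↦ log (s + 1)) (1 / (s + 1)) s :=
    ((hasDerivAt_id s).add_const 1).log (by positivity)
  refine ((hlog.sub (hasDerivAt_log hs.ne')).sub (hasDerivAt_inv hs.ne')).congr_deriv ?_
  field_simp
  ring

lemma tendsto_log_add_one_sub_log_sub_inv_atTop :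
    Tendsto (fun s ↦ log (s + 1) - log s - s⁻¹) atTop (𝓝 0) := by
  simpa using (tendsto_log_comp_add_sub_log 1).sub tendsto_inv_atTop_zero

lemma integrableOn_and_integral_Ioi_one_div_sq_mul {c : ℝ} (hc : 0 < c) :
    IntegrableOn (fun t ↦ 1 / ((t + c - 1) ^ 2 * (t + c))) (Ioi 1) ∧
      ∫ t in Ioi 1, 1 / ((t + c - 1) ^ 2 * (t + c)) = 1 / c - (log (c + 1) - log c) := by
  set F : ℝ → ℝ := fun s ↦ log (s + 1) - log s - s⁻¹
  have hderiv : ∀ t ∈ Ici 1,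
      HasDerivAt (fun t ↦ F (t + c - 1)) (1 / ((t + c - 1) ^ 2 * (t + c))) t := by
    intro t ht
    have hs : 0 < t + c - 1 := by linarith [mem_Ici.1 ht]
    refine ((hasDerivAt_log_add_one_sub_log_sub_inv hs).comp t
      (((hasDerivAt_id t).add_const c).sub_const 1)).congr_deriv ?_
    rw [sub_add_cancel, mul_one]
  have hnonneg : ∀ t ∈ Ioi 1, 0 ≤ 1 / ((t + c - 1) ^ 2 * (t + c)) := fun t ht ↦
    one_div_nonneg.2 (mul_nonneg (sq_nonneg _) (by linarith [mem_Ioi.1 ht]))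
  have hlim : Tendsto (fun t ↦ F (t + c - 1)) atTop (𝓝 0) :=
    tendsto_log_add_one_sub_log_sub_inv_atTop.comp
      (tendsto_atTop_add_const_right _ _ (tendsto_atTop_add_const_right _ _ tendsto_id))
  refine ⟨integrableOn_Ioi_deriv_of_nonneg' hderiv hnonneg hlim, ?_⟩
  rw [integral_Ioi_of_hasDerivAt_of_nonneg' hderiv hnonneg hlim, add_sub_cancel_left]
  simp only [F]
  ring

lemma eulerMascheroniSeq_succ_sub (n : ℕ) :
    eulerMascheroniSeq (n + 1) - eulerMascheroniSeq n =
      1 / (n + 1 : ℕ) - (log ((n + 1 : ℕ) + 1) - log (n + 1 : ℕ)) := by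
  simp only [eulerMascheroniSeq, harmonic_succ]
  push_cast
  ring

lemma hasSum_eulerMascheroniSeq_succ_sub :
    HasSum (fun n ↦ eulerMascheroniSeq (n + 1) - eulerMascheroniSeq n)
      eulerMascheroniConstant := by
  rw [hasSum_iff_tendsto_nat_of_nonneg
    fun n ↦ sub_nonneg.2 (strictMono_eulerMascheroniSeq.monotone n.le_succ)]
  simpa [Finset.sum_range_sub (f := eulerMascheroniSeq), eulerMascheroniSeq_zero]
    using tendsto_eulerMascheroniSeq

lemma hasSum_one_div_sub_log_add_one_sub_log :
    HasSum (fun n : ℕ+ ↦ 1 / (n : ℝ) - (log (n + 1) - log n)) eulerMascheroniConstant := by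
  rw [hasSum_pnat_iff_hasSum_succ (f := fun n : ℕ ↦ 1 / (n : ℝ) - (log (n + 1) - log n))]
  simpa only [eulerMascheroniSeq_succ_sub] using hasSum_eulerMascheroniSeq_succ_sub

theorem stmt3 :
    Real.eulerMascheroniConstant =
      ∫ t in Set.Ioi (1 : ℝ), ∑' n : ℕ+, 1 / ((t + n - 1) ^ 2 * (t + n)) := by
  have hpos (n : ℕ+) : (0 : ℝ) < n := Nat.cast_pos.2 n.pos
  have hsum : HasSum (fun n : ℕ+ ↦ ∫ t in Ioi (1 : ℝ), 1 / ((t + n - 1) ^ 2 * (t + n)))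
      eulerMascheroniConstant := by
    simpa only [(integrableOn_and_integral_Ioi_one_div_sq_mul (hpos _)).2]
      using hasSum_one_div_sub_log_add_one_sub_log
  rw [← integral_tsum_of_summable_integral_norm
    (fun n ↦ (integrableOn_and_integral_Ioi_one_div_sq_mul (hpos n)).1), hsum.tsum_eq]
  refine hsum.summable.congr fun n ↦ setIntegral_congr_fun measurableSet_Ioi fun t ht ↦ ?_
  have hnonneg : 0 ≤ 1 / ((t + n - 1) ^ 2 * (t + n)) :=
    one_div_nonneg.2 (mul_nonneg (sq_nonneg _) (by linarith [mem_Ioi.1 ht, hpos n]))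
  exact (norm_of_nonneg hnonneg).symm
end

section
/- Euler's constant equals the classical integral γ = ∫_0^1 (1/ln u + 1/(1−u)) du. -/
/-!
Writing `H_n = ∫₀¹ (1 - uⁿ)/(1 - u) du` and, by Fubini applied to `u ^ s` on `(0,1) × (0,n]`,
`log (n + 1) = ∫₀¹ (1 - uⁿ)/(-log u) du`, one gets
`H_n - log (n + 1) = ∫₀¹ (1 - uⁿ) (1/log u + 1/(1 - u)) du`.
The integrand `1/log u + 1/(1 - u)` lies in `[0, 1]`, so dominated convergence lets `n → ∞`.
-/

open MeasureTheory Real Set Filter Topology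

lemma inv_log_add_inv_one_sub_mem_Icc {u : ℝ} (hu₀ : 0 < u) (hu₁ : u < 1) :
    1 / log u + 1 / (1 - u) ∈ Icc (0 : ℝ) 1 := by
  have hL : 0 < -log u := neg_pos.mpr (log_neg hu₀ hu₁)
  have h1u : 0 < 1 - u := sub_pos.mpr hu₁
  have hlower : 1 - u ≤ -log u := by linarith [log_le_sub_one_of_pos hu₀]
  have hupper : u * -log u ≤ 1 - u := by
    have h : u * -log u ≤ u * (u⁻¹ - 1) := by
      gcongr
      linarith [one_sub_inv_le_log_of_pos hu₀]
    rwa [mul_sub, mul_inv_cancel₀ hu₀.ne', mul_one] at h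
  have hrw : 1 / log u + 1 / (1 - u) = (-log u - (1 - u)) / ((1 - u) * -log u) := by
    have hlog : log u ≠ 0 := by linarith
    field_simp
    ring
  rw [hrw]
  exact ⟨div_nonneg (by linarith) (by positivity),
    (div_le_one (by positivity)).mpr (by nlinarith)⟩

lemma integrableOn_inv_log_add_inv_one_sub :
    IntegrableOn (fun u : ℝ => 1 / log u + 1 / (1 - u)) (Ioo 0 1) := by
  refine Measure.integrableOn_of_bounded (M := 1) (by simp)
    (by fun_prop : Measurable fun u : ℝ => 1 / log u + 1 / (1 - u)).aestronglyMeasurable ?_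
  refine (ae_restrict_iff' measurableSet_Ioo).mpr (Eventually.of_forall fun u hu => ?_)
  obtain ⟨h0, h1⟩ := inv_log_add_inv_one_sub_mem_Icc hu.1 hu.2
  rwa [norm_of_nonneg h0]

lemma harmonic_eq_integral_geom_sum (n : ℕ) :
    (harmonic n : ℝ) = ∫ u in Ioo (0 : ℝ) 1, ∑ k ∈ Finset.range n, u ^ k := by
  rw [← integral_Ioc_eq_integral_Ioo, ← intervalIntegral.integral_of_le zero_le_one,
    intervalIntegral.integral_finsetSum fun k _ => intervalIntegral.intervalIntegrable_pow k,
    harmonic]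
  push_cast
  refine Finset.sum_congr rfl fun k _ => ?_
  simp [integral_pow]

lemma integral_const_rpow {a : ℝ} (ha₀ : 0 < a) (ha₁ : a ≠ 1) (s t : ℝ) :
    ∫ x in s..t, a ^ x = (a ^ t - a ^ s) / log a := by
  have hlog : log a ≠ 0 := log_ne_zero_of_pos_of_ne_one ha₀ ha₁
  have hderiv : ∀ x ∈ uIcc s t, HasDerivAt (fun x => a ^ x / log a) (a ^ x) x := fun x _ => by
    simpa [hlog] using ((hasStrictDerivAt_const_rpow ha₀ x).hasDerivAt.div_const (log a))
  rw [intervalIntegral.integral_eq_sub_of_hasDerivAt hderiv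
    ((continuous_const_rpow ha₀.ne').intervalIntegrable s t), sub_div]

lemma integral_inv_add_one {t : ℝ} (ht : 0 ≤ t) : ∫ s in (0 : ℝ)..t, (s + 1)⁻¹ = log (t + 1) := by
  have hzero : (0 : ℝ) ∉ uIcc (0 + 1) (t + 1) := by
    rw [uIcc_of_le (by linarith)]
    exact fun h => by linarith [h.1]
  rw [intervalIntegral.integral_comp_add_right (fun s => s⁻¹), integral_inv hzero, zero_add,
    div_one]

lemma setIntegral_Ioo_zero_one_rpow {s : ℝ} (hs : -1 < s) :
    ∫ u in Ioo (0 : ℝ) 1, u ^ s = (s + 1)⁻¹ := by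
  rw [← integral_Ioc_eq_integral_Ioo, ← intervalIntegral.integral_of_le zero_le_one,
    integral_rpow (Or.inl hs), one_rpow, zero_rpow (by linarith), sub_zero, one_div]

lemma log_add_one_eq_integral {t : ℝ} (ht : 0 ≤ t) :
    log (t + 1) = ∫ u in Ioo (0 : ℝ) 1, (1 - u ^ t) / -log u := by
  have hint : Integrable (Function.uncurry fun (u s : ℝ) => u ^ s)
      ((volume.restrict (Ioo (0 : ℝ) 1)).prod (volume.restrict (Ioc 0 t))) := by
    rw [Measure.prod_restrict]
    refine Measure.integrableOn_of_bounded (M := 1) (by simp)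
      (by fun_prop : Measurable fun p : ℝ × ℝ => p.1 ^ p.2).aestronglyMeasurable ?_
    refine (ae_restrict_iff' (measurableSet_Ioo.prod measurableSet_Ioc)).mpr
      (Eventually.of_forall fun p ⟨hu, hs⟩ => ?_)
    rw [Function.uncurry_apply_pair, norm_of_nonneg (rpow_nonneg hu.1.le _)]
    exact rpow_le_one hu.1.le hu.2.le hs.1.le
  have inner_s : ∀ u ∈ Ioo (0 : ℝ) 1, ∫ s in Ioc 0 t, u ^ s = (1 - u ^ t) / -log u := by
    intro u hu
    rw [← intervalIntegral.integral_of_le ht, integral_const_rpow hu.1 hu.2.ne, rpow_zero,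
      div_neg, ← neg_div, neg_sub]
  have inner_u : ∀ s ∈ Ioc 0 t, ∫ u in Ioo (0 : ℝ) 1, u ^ s = (s + 1)⁻¹ :=
    fun s hs => setIntegral_Ioo_zero_one_rpow (by linarith [hs.1])
  rw [← setIntegral_congr_fun measurableSet_Ioo inner_s, integral_integral_swap hint,
    setIntegral_congr_fun measurableSet_Ioc inner_u, ← intervalIntegral.integral_of_le ht,
    integral_inv_add_one ht]

lemma norm_one_sub_pow_le_one {u : ℝ} (hu₀ : 0 ≤ u) (hu₁ : u ≤ 1) (n : ℕ) : ‖1 - u ^ n‖ ≤ 1 := by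
  rw [norm_of_nonneg (sub_nonneg.mpr (pow_le_one₀ hu₀ hu₁))]
  linarith [pow_nonneg hu₀ n]

lemma harmonic_sub_log_eq_integral (n : ℕ) :
    (harmonic n : ℝ) - log (n + 1)
      = ∫ u in Ioo (0 : ℝ) 1, (1 - u ^ n) * (1 / log u + 1 / (1 - u)) := by
  have hgeom : IntegrableOn (fun u : ℝ => ∑ k ∈ Finset.range n, u ^ k) (Ioo 0 1) :=
    (continuous_finsetSum _ fun k _ => continuous_pow k).integrableOn_Icc.mono_set
      Ioo_subset_Icc_self
  have hprod : IntegrableOn (fun u : ℝ => (1 - u ^ n) * (1 / log u + 1 / (1 - u))) (Ioo 0 1) := by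
    refine integrableOn_inv_log_add_inv_one_sub.bdd_mul (c := 1) (by fun_prop) ?_
    exact (ae_restrict_iff' measurableSet_Ioo).mpr
      (Eventually.of_forall fun u hu => norm_one_sub_pow_le_one hu.1.le hu.2.le n)
  have hsplit : EqOn (fun u : ℝ => (1 - u ^ (n : ℝ)) / -log u)
      (fun u => ∑ k ∈ Finset.range n, u ^ k - (1 - u ^ n) * (1 / log u + 1 / (1 - u)))
      (Ioo 0 1) := by
    intro u hu
    have hlog : log u ≠ 0 := (log_neg hu.1 hu.2).ne
    have h1u : 1 - u ≠ 0 := (sub_pos.mpr hu.2).ne'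
    have hu1 : u - 1 ≠ 0 := (sub_neg.mpr hu.2).ne
    simp only [rpow_natCast, geom_sum_eq hu.2.ne, mul_add]
    field_simp
    ring
  rw [harmonic_eq_integral_geom_sum, log_add_one_eq_integral (Nat.cast_nonneg n),
    setIntegral_congr_fun measurableSet_Ioo hsplit, integral_sub hgeom hprod, sub_sub_cancel]

lemma tendsto_integral_one_sub_pow_mul :
    Tendsto (fun n : ℕ => ∫ u in Ioo (0 : ℝ) 1, (1 - u ^ n) * (1 / log u + 1 / (1 - u))) atTop
      (𝓝 (∫ u in Ioo (0 : ℝ) 1, (1 / log u + 1 / (1 - u)))) := by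
  refine tendsto_integral_of_dominated_convergence (fun u => ‖1 / log u + 1 / (1 - u)‖)
    (fun n => (by fun_prop : Measurable fun u : ℝ =>
      (1 - u ^ n) * (1 / log u + 1 / (1 - u))).aestronglyMeasurable)
    integrableOn_inv_log_add_inv_one_sub.norm (fun n => ?_) ?_
  all_goals refine (ae_restrict_iff' measurableSet_Ioo).mpr (Eventually.of_forall fun u hu => ?_)
  · rw [norm_mul]
    exact mul_le_of_le_one_left (norm_nonneg _) (norm_one_sub_pow_le_one hu.1.le hu.2.le n)
  · simpa using ((tendsto_pow_atTop_nhds_zero_of_lt_one hu.1.le hu.2).const_sub 1).mul_const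
      (1 / log u + 1 / (1 - u))

theorem stmt9 :
    Real.eulerMascheroniConstant =
      ∫ u in Set.Ioo (0 : ℝ) 1, (1 / Real.log u + 1 / (1 - u)) :=
  tendsto_nhds_unique tendsto_harmonic_sub_log_add_one <|
    tendsto_integral_one_sub_pow_mul.congr fun n => (harmonic_sub_log_eq_integral n).symm
end

section
/- Euler's constant satisfies the double integral formula γ = ∫_0^1 ∫_0^1 −(1−x)/((1−xy) ln(xy)) dx dy. -/
/-!
For `0 < u < 1`, `-1 / ((1 - u) log u) = ∑ₙ ∫₀^∞ u^(n+s) ds` (a geometric series times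
`∫₀^∞ u^s ds = -1 / log u`). With `u = xy` everything is nonnegative, so by Tonelli the double
integral is `∑ₙ ∫₀^∞ ∫∫ (1-x)(xy)^(n+s) dx dy ds`. The inner integral is
`1/(t+1) (1/(t+1) - 1/(t+2))` with `t = n + s`, whose `s`-integral is
`1/(n+1) - log((n+2)/(n+1))`; these are the increments of `H_N - log (N+1) → γ`.
-/

open MeasureTheory Set Real Filter

lemma lintegral_Ioi_rpow_of_lt_one {u : ℝ} (hu₀ : 0 < u) (hu₁ : u < 1) :
    ∫⁻ s in Ioi (0 : ℝ), ENNReal.ofReal (u ^ s) = ENNReal.ofReal (-log u)⁻¹ := by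
  have hlog : log u < 0 := log_neg hu₀ hu₁
  have hexp : ∀ s : ℝ, u ^ s = exp (log u * s) := fun s => rpow_def_of_pos hu₀ s
  simp_rw [hexp]
  rw [← ofReal_integral_eq_lintegral_ofReal (integrableOn_exp_mul_Ioi hlog 0)
      (ae_of_all _ fun s => (exp_pos _).le), integral_exp_mul_Ioi hlog 0]
  simp [div_eq_mul_inv, ← inv_neg]

lemma integrableOn_Ioo_rpow {p : ℝ} (hp : -1 < p) :
    IntegrableOn (fun x : ℝ => x ^ p) (Ioo 0 1) :=
  ((intervalIntegrable_iff_integrableOn_Ioc_of_le zero_le_one).mp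
    (intervalIntegral.intervalIntegrable_rpow' hp)).mono_set Ioo_subset_Ioc_self

lemma integral_Ioo_rpow {p : ℝ} (hp : -1 < p) :
    ∫ x in Ioo (0 : ℝ) 1, x ^ p = (p + 1)⁻¹ := by
  rw [← integral_Ioc_eq_integral_Ioo, ← intervalIntegral.integral_of_le zero_le_one,
    integral_rpow (Or.inl hp), zero_rpow (by linarith), one_rpow]
  norm_num

lemma lintegral_Ioo_rpow {p : ℝ} (hp : -1 < p) :
    ∫⁻ x in Ioo (0 : ℝ) 1, ENNReal.ofReal (x ^ p) = ENNReal.ofReal (p + 1)⁻¹ := by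
  rw [← ofReal_integral_eq_lintegral_ofReal (integrableOn_Ioo_rpow hp)
    ((ae_restrict_iff' measurableSet_Ioo).mpr (ae_of_all _ fun x hx => rpow_nonneg hx.1.le p)),
    integral_Ioo_rpow hp]

lemma lintegral_Ioo_one_sub_mul_rpow {p : ℝ} (hp : -1 < p) :
    ∫⁻ x in Ioo (0 : ℝ) 1, ENNReal.ofReal ((1 - x) * x ^ p)
      = ENNReal.ofReal ((p + 1)⁻¹ - (p + 2)⁻¹) := by
  have hp' : -1 < p + 1 := by linarith
  have hsplit : EqOn (fun x : ℝ => (1 - x) * x ^ p) (fun x => x ^ p - x ^ (p + 1)) (Ioo 0 1) :=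
    fun x hx => by simp only [rpow_add_one hx.1.ne']; ring
  have hint : IntegrableOn (fun x : ℝ => (1 - x) * x ^ p) (Ioo 0 1) :=
    ((integrableOn_Ioo_rpow hp).sub (integrableOn_Ioo_rpow hp')).congr_fun hsplit.symm
      measurableSet_Ioo
  rw [← ofReal_integral_eq_lintegral_ofReal hint ((ae_restrict_iff' measurableSet_Ioo).mpr
      (ae_of_all _ fun x hx => mul_nonneg (sub_nonneg.2 hx.2.le) (rpow_nonneg hx.1.le p))),
    setIntegral_congr_fun measurableSet_Ioo hsplit,
    integral_sub (integrableOn_Ioo_rpow hp) (integrableOn_Ioo_rpow hp'),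
    integral_Ioo_rpow hp, integral_Ioo_rpow hp']
  ring_nf

lemma lintegral_Ioi_inv_mul_inv_sub_inv {c : ℝ} (hc : -1 < c) :
    ∫⁻ s in Ioi (0 : ℝ), ENNReal.ofReal ((c + s + 1)⁻¹ * ((c + s + 1)⁻¹ - (c + s + 2)⁻¹))
      = ENNReal.ofReal ((c + 1)⁻¹ - (log (c + 2) - log (c + 1))) := by
  set g : ℝ → ℝ := fun s => log (c + s + 2) - log (c + s + 1) - (c + s + 1)⁻¹
  have hderiv : ∀ s ∈ Ici (0 : ℝ),
      HasDerivAt g ((c + s + 1)⁻¹ * ((c + s + 1)⁻¹ - (c + s + 2)⁻¹)) s := by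
    intro s hs
    have h₁ : c + s + 1 ≠ 0 := by linarith [mem_Ici.mp hs]
    have h₂ : c + s + 2 ≠ 0 := by linarith [mem_Ici.mp hs]
    have hlin : ∀ d : ℝ, HasDerivAt (fun s => c + s + d) 1 s := fun d => by
      simpa using ((hasDerivAt_id s).const_add c).add_const d
    refine ((((hlin 2).log h₂).sub ((hlin 1).log h₁)).sub ((hlin 1).inv h₁)).congr_deriv ?_
    field_simp
    ring
  have hderiv_nonneg : ∀ s ∈ Ioi (0 : ℝ),
      0 ≤ (c + s + 1)⁻¹ * ((c + s + 1)⁻¹ - (c + s + 2)⁻¹) := by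
    intro s hs
    have h₁ : 0 < c + s + 1 := by linarith [mem_Ioi.mp hs]
    exact mul_nonneg (inv_nonneg.2 h₁.le) (sub_nonneg.2 (inv_anti₀ h₁ (by linarith)))
  have hlim : Tendsto g atTop (nhds 0) := by
    have hshift : Tendsto (fun s : ℝ => c + s + 1) atTop atTop :=
      tendsto_atTop_add_const_right _ 1 (tendsto_atTop_add_const_left _ c tendsto_id)
    have hlog := (tendsto_log_comp_add_sub_log 1).comp hshift
    simpa [g, add_assoc, one_add_one_eq_two] using hlog.sub (tendsto_inv_atTop_zero.comp hshift)
  rw [← ofReal_integral_eq_lintegral_ofReal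
      (integrableOn_Ioi_deriv_of_nonneg' hderiv hderiv_nonneg hlim)
      ((ae_restrict_iff' measurableSet_Ioi).mpr (ae_of_all _ hderiv_nonneg)),
    integral_Ioi_of_hasDerivAt_of_nonneg' hderiv hderiv_nonneg hlim]
  simp only [g, add_zero, zero_sub]
  ring_nf

lemma eulerMascheroniSeq_eq_sum (N : ℕ) :
    eulerMascheroniSeq N
      = ∑ n ∈ Finset.range N, ((n + 1 : ℝ)⁻¹ - (log (n + 2) - log (n + 1))) := by
  have htelescope := Finset.sum_range_sub (fun n : ℕ => log ((n : ℝ) + 1)) N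
  push_cast at htelescope
  rw [eulerMascheroniSeq, harmonic, Finset.sum_sub_distrib]
  simp only [zero_add, log_one, sub_zero, add_assoc, one_add_one_eq_two] at htelescope
  push_cast
  rw [htelescope]

lemma log_add_two_sub_log_add_one_le {c : ℝ} (hc : -1 < c) :
    log (c + 2) - log (c + 1) ≤ (c + 1)⁻¹ := by
  have h₁ : 0 < c + 1 := by linarith
  rw [← log_div (by linarith) h₁.ne']
  calc log ((c + 2) / (c + 1)) ≤ (c + 2) / (c + 1) - 1 :=
        log_le_sub_one_of_pos (div_pos (by linarith) h₁)
    _ = (c + 1)⁻¹ := by field_simp; ring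

lemma inv_natCast_add_one_sub_log_sub_log_nonneg (n : ℕ) :
    0 ≤ (n + 1 : ℝ)⁻¹ - (log (n + 2) - log (n + 1)) :=
  sub_nonneg.2 (log_add_two_sub_log_add_one_le (neg_one_lt_zero.trans_le n.cast_nonneg))

lemma hasSum_eulerMascheroniConstant :
    HasSum (fun n : ℕ => (n + 1 : ℝ)⁻¹ - (log (n + 2) - log (n + 1))) eulerMascheroniConstant := by
  rw [hasSum_iff_tendsto_nat_of_nonneg inv_natCast_add_one_sub_log_sub_log_nonneg]
  simp_rw [← eulerMascheroniSeq_eq_sum]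
  exact tendsto_eulerMascheroniSeq

lemma lintegral_lintegral_lintegral_swap {α β γ : Type*} [MeasurableSpace α]
    [MeasurableSpace β] [MeasurableSpace γ] {μ : Measure α} {ν : Measure β} {ρ : Measure γ}
    [SFinite μ] [SFinite ν] [SFinite ρ] {f : α → β → γ → ENNReal}
    (hf : Measurable (Function.uncurry (Function.uncurry f))) :
    ∫⁻ a, ∫⁻ b, ∫⁻ c, f a b c ∂ρ ∂ν ∂μ = ∫⁻ c, ∫⁻ a, ∫⁻ b, f a b c ∂ν ∂μ ∂ρ := by
  rw [← lintegral_prod (fun p => ∫⁻ c, f p.1 p.2 c ∂ρ) hf.lintegral_prod_right.aemeasurable]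
  refine (lintegral_lintegral_swap (f := fun (p : α × β) c => f p.1 p.2 c) hf.aemeasurable).trans ?_
  refine lintegral_congr fun c => lintegral_prod _ ?_
  exact (hf.comp (measurable_id.prodMk measurable_const)).aemeasurable

lemma integral_integral_eq_of_lintegral_lintegral_ofReal_eq {α β : Type*} [MeasurableSpace α]
    [MeasurableSpace β] {μ : Measure α} {ν : Measure β} [SFinite ν] {f : α → β → ℝ}
    (hf : Measurable (Function.uncurry f)) (hf₀ : ∀ᵐ a ∂μ, 0 ≤ᵐ[ν] f a) {c : ℝ} (hc : 0 ≤ c)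
    (h : ∫⁻ a, ∫⁻ b, ENNReal.ofReal (f a b) ∂ν ∂μ = ENNReal.ofReal c) :
    ∫ a, ∫ b, f a b ∂ν ∂μ = c := by
  have hF : Measurable fun a => ∫⁻ b, ENNReal.ofReal (f a b) ∂ν :=
    hf.ennreal_ofReal.lintegral_prod_right
  have hinner : (fun a => ∫ b, f a b ∂ν) =ᵐ[μ] fun a => (∫⁻ b, ENNReal.ofReal (f a b) ∂ν).toReal :=
    hf₀.mono fun a ha =>
      integral_eq_lintegral_of_nonneg_ae ha (hf.comp measurable_prodMk_left).aestronglyMeasurable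
  rw [integral_congr_ae hinner, integral_toReal hF.aemeasurable
    (ae_lt_top hF (h ▸ ENNReal.ofReal_ne_top)), h, ENNReal.toReal_ofReal hc]

lemma ofReal_neg_inv_one_sub_mul_log_eq_tsum {u : ℝ} (hu₀ : 0 < u) (hu₁ : u < 1) :
    ENNReal.ofReal (-((1 - u) * log u)⁻¹)
      = ∑' n : ℕ, ∫⁻ s in Ioi (0 : ℝ), ENNReal.ofReal (u ^ ((n : ℝ) + s)) := by
  have hsplit : ∀ (n : ℕ) (s : ℝ),
      ENNReal.ofReal (u ^ ((n : ℝ) + s)) = ENNReal.ofReal (u ^ n) * ENNReal.ofReal (u ^ s) :=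
    fun n s => by rw [rpow_add hu₀, rpow_natCast, ENNReal.ofReal_mul (pow_nonneg hu₀.le n)]
  have hgeom : ∑' n : ℕ, ENNReal.ofReal (u ^ n) = ENNReal.ofReal (1 - u)⁻¹ := by
    rw [← ENNReal.ofReal_tsum_of_nonneg (fun n => pow_nonneg hu₀.le n)
      (summable_geometric_of_lt_one hu₀.le hu₁), tsum_geometric_of_lt_one hu₀.le hu₁]
  simp_rw [hsplit, lintegral_const_mul' _ _ ENNReal.ofReal_ne_top,
    lintegral_Ioi_rpow_of_lt_one hu₀ hu₁, ENNReal.tsum_mul_right, hgeom,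
    ← ENNReal.ofReal_mul (inv_nonneg.2 (sub_nonneg.2 hu₁.le)), mul_inv, inv_neg, mul_neg]

lemma lintegral_unitSquare_one_sub_mul_rpow {t : ℝ} (ht : -1 < t) :
    ∫⁻ y in Ioo (0 : ℝ) 1, ∫⁻ x in Ioo (0 : ℝ) 1,
        ENNReal.ofReal (1 - x) * ENNReal.ofReal ((x * y) ^ t)
      = ENNReal.ofReal ((t + 1)⁻¹ * ((t + 1)⁻¹ - (t + 2)⁻¹)) := by
  have hinner : ∀ y ∈ Ioo (0 : ℝ) 1,
      ∫⁻ x in Ioo (0 : ℝ) 1, ENNReal.ofReal (1 - x) * ENNReal.ofReal ((x * y) ^ t)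
        = ENNReal.ofReal (y ^ t) * ENNReal.ofReal ((t + 1)⁻¹ - (t + 2)⁻¹) := by
    intro y hy
    rw [← lintegral_Ioo_one_sub_mul_rpow ht, ← lintegral_const_mul' _ _ ENNReal.ofReal_ne_top]
    refine setLIntegral_congr_fun measurableSet_Ioo fun x hx => ?_
    rw [mul_rpow hx.1.le hy.1.le, ← ENNReal.ofReal_mul (sub_nonneg.2 hx.2.le),
      ← ENNReal.ofReal_mul (rpow_nonneg hy.1.le t)]
    ring_nf
  rw [setLIntegral_congr_fun measurableSet_Ioo hinner,
    lintegral_mul_const' _ _ ENNReal.ofReal_ne_top, lintegral_Ioo_rpow ht,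
    ← ENNReal.ofReal_mul (inv_nonneg.2 (by linarith))]

lemma ofReal_neg_one_sub_div_mul_log_eq_tsum {x y : ℝ} (hx : x ∈ Ioo (0 : ℝ) 1)
    (hy : y ∈ Ioo (0 : ℝ) 1) :
    ENNReal.ofReal (-(1 - x) / ((1 - x * y) * log (x * y)))
      = ∑' n : ℕ, ∫⁻ s in Ioi (0 : ℝ),
          ENNReal.ofReal (1 - x) * ENNReal.ofReal ((x * y) ^ ((n : ℝ) + s)) := by
  have hxy₀ : 0 < x * y := mul_pos hx.1 hy.1
  have hxy₁ : x * y < 1 := mul_lt_one_of_nonneg_of_lt_one_left hx.1.le hx.2 hy.2.le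
  rw [show -(1 - x) / ((1 - x * y) * log (x * y)) = (1 - x) * -((1 - x * y) * log (x * y))⁻¹ by
      ring, ENNReal.ofReal_mul (sub_nonneg.2 hx.2.le),
    ofReal_neg_inv_one_sub_mul_log_eq_tsum hxy₀ hxy₁, ← ENNReal.tsum_mul_left]
  simp_rw [lintegral_const_mul' _ _ ENNReal.ofReal_ne_top]

lemma lintegral_unitSquare_eq_ofReal_eulerMascheroniConstant :
    ∫⁻ y in Ioo (0 : ℝ) 1, ∫⁻ x in Ioo (0 : ℝ) 1,
        ENNReal.ofReal (-(1 - x) / ((1 - x * y) * log (x * y)))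
      = ENNReal.ofReal eulerMascheroniConstant := by
  set G : ℕ → ℝ → ℝ → ℝ → ENNReal := fun n y x s =>
    ENNReal.ofReal (1 - x) * ENNReal.ofReal ((x * y) ^ ((n : ℝ) + s))
  have hG : ∀ n, Measurable (Function.uncurry (Function.uncurry (G n))) := fun n => by
    simp only [G]; fun_prop
  have hterm : ∀ n : ℕ, ∫⁻ y in Ioo (0 : ℝ) 1, ∫⁻ x in Ioo (0 : ℝ) 1, ∫⁻ s in Ioi (0 : ℝ), G n y x s
      = ENNReal.ofReal ((n + 1 : ℝ)⁻¹ - (log (n + 2) - log (n + 1))) := by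
    intro n
    have hn : (-1 : ℝ) < n := neg_one_lt_zero.trans_le n.cast_nonneg
    rw [lintegral_lintegral_lintegral_swap (hG n), ← lintegral_Ioi_inv_mul_inv_sub_inv hn]
    refine setLIntegral_congr_fun measurableSet_Ioi fun s hs => ?_
    exact lintegral_unitSquare_one_sub_mul_rpow (by linarith [mem_Ioi.mp hs])
  calc ∫⁻ y in Ioo (0 : ℝ) 1, ∫⁻ x in Ioo (0 : ℝ) 1,
        ENNReal.ofReal (-(1 - x) / ((1 - x * y) * log (x * y)))
      = ∫⁻ y in Ioo (0 : ℝ) 1, ∫⁻ x in Ioo (0 : ℝ) 1, ∑' n, ∫⁻ s in Ioi (0 : ℝ), G n y x s :=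
        setLIntegral_congr_fun measurableSet_Ioo fun y hy =>
          setLIntegral_congr_fun measurableSet_Ioo fun x hx =>
            ofReal_neg_one_sub_div_mul_log_eq_tsum hx hy
    _ = ∑' n, ∫⁻ y in Ioo (0 : ℝ) 1, ∫⁻ x in Ioo (0 : ℝ) 1, ∫⁻ s in Ioi (0 : ℝ), G n y x s := by
        rw [← lintegral_tsum fun n =>
          (hG n).lintegral_prod_right.lintegral_prod_right.aemeasurable]
        exact lintegral_congr fun y => lintegral_tsum fun n =>
          (Measurable.lintegral_prod_right (f := G n y) (by simp only [G]; fun_prop)).aemeasurable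
    _ = ∑' n : ℕ, ENNReal.ofReal ((n + 1 : ℝ)⁻¹ - (log (n + 2) - log (n + 1))) := by
        simp_rw [hterm]
    _ = ENNReal.ofReal eulerMascheroniConstant := by
        rw [← ENNReal.ofReal_tsum_of_nonneg inv_natCast_add_one_sub_log_sub_log_nonneg
          hasSum_eulerMascheroniConstant.summable, hasSum_eulerMascheroniConstant.tsum_eq]

theorem stmt12 :
    Real.eulerMascheroniConstant =
      ∫ y in Set.Ioo (0 : ℝ) 1, ∫ x in Set.Ioo (0 : ℝ) 1,
        -(1 - x) / ((1 - x * y) * Real.log (x * y)) := by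
  have hnonneg : ∀ y ∈ Ioo (0 : ℝ) 1, ∀ x ∈ Ioo (0 : ℝ) 1,
      0 ≤ -(1 - x) / ((1 - x * y) * log (x * y)) := fun y hy x hx =>
    div_nonneg_of_nonpos (neg_nonpos.2 (sub_nonneg.2 hx.2.le))
      (mul_nonpos_of_nonneg_of_nonpos (sub_nonneg.2 (mul_le_one₀ hx.2.le hy.1.le hy.2.le))
        (log_nonpos (mul_pos hx.1 hy.1).le (mul_le_one₀ hx.2.le hy.1.le hy.2.le)))
  refine (integral_integral_eq_of_lintegral_lintegral_ofReal_eq (by fun_prop)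
    (ae_restrict_of_forall_mem measurableSet_Ioo fun y hy =>
      ae_restrict_of_forall_mem measurableSet_Ioo (hnonneg y hy))
    (by linarith [one_half_lt_eulerMascheroniConstant])
    lintegral_unitSquare_eq_ofReal_eulerMascheroniConstant).symm
end

section
/- The change of variables v = 1−x, u = xy transforms the double integral ∫∫_{[0,1]²} −(1−x)/((1−xy)ln(xy)) dx dy into ∫_0^1 ∫_0^{1−u} −v/((1−v)(1−u) ln u) dv du; i.e., these two integrals are equal. -/
/-!
Substituting `u = x y` in the inner integral turns the left side into an integral over the
triangle `0 < u < y < 1`. The integrand is nonnegative there, so by Tonelli one may integrate in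
`y` first; this inner `y`-integral and the inner `v`-integral of the right side both evaluate to
`(-log u - (1 - u)) / ((1 - u) (-log u))`.
-/

open MeasureTheory Set

section Tonelli

variable {α β : Type*} [MeasurableSpace α] [MeasurableSpace β] {μ : Measure α} {ν : Measure β}
  [SFinite ν]

theorem integral_integral_eq_toReal_lintegral_lintegral {f : α → β → ℝ}
    (hf : AEStronglyMeasurable (Function.uncurry f) (μ.prod ν)) (hf₀ : ∀ x y, 0 ≤ f x y)
    (hfi : ∀ᵐ x ∂μ, Integrable (f x) ν) :
    ∫ x, ∫ y, f x y ∂ν ∂μ = (∫⁻ x, ∫⁻ y, ENNReal.ofReal (f x y) ∂ν ∂μ).toReal := by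
  rw [integral_eq_lintegral_of_nonneg_ae (.of_forall fun x ↦ integral_nonneg (hf₀ x))
    hf.integral_prod_right']
  congr 1
  refine lintegral_congr_ae ?_
  filter_upwards [hfi] with x hx
  exact ofReal_integral_eq_lintegral_ofReal hx (.of_forall (hf₀ x))

variable [SFinite μ]

/-- Unlike `integral_integral_swap`, no integrability on the product is assumed. -/
theorem integral_integral_swap_of_nonneg {f : α → β → ℝ}
    (hf : AEStronglyMeasurable (Function.uncurry f) (μ.prod ν)) (hf₀ : ∀ x y, 0 ≤ f x y)
    (hfx : ∀ᵐ x ∂μ, Integrable (f x) ν) (hfy : ∀ᵐ y ∂ν, Integrable (fun x ↦ f x y) μ) :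
    ∫ x, ∫ y, f x y ∂ν ∂μ = ∫ y, ∫ x, f x y ∂μ ∂ν := by
  rw [integral_integral_eq_toReal_lintegral_lintegral hf hf₀ hfx,
    integral_integral_eq_toReal_lintegral_lintegral (f := fun y x ↦ f x y) hf.prod_swap
      (fun y x ↦ hf₀ x y) hfy,
    lintegral_lintegral_swap hf.aemeasurable.ennreal_ofReal]

end Tonelli

theorem integral_Ioo_Ioo_swap {a b : ℝ} {f : ℝ → ℝ → ℝ} (hf : Measurable (Function.uncurry f))
    (hf₀ : ∀ u y, a < u → u < y → y < b → 0 ≤ f u y)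
    (hfu : ∀ y ∈ Ioo a b, IntegrableOn (fun u ↦ f u y) (Ioo a y))
    (hfy : ∀ u ∈ Ioo a b, IntegrableOn (f u) (Ioo u b)) :
    ∫ y in Ioo a b, ∫ u in Ioo a y, f u y = ∫ u in Ioo a b, ∫ y in Ioo u b, f u y := by
  set F : ℝ → ℝ → ℝ := fun y u ↦ if a < u ∧ u < y ∧ y < b then f u y else 0 with hF
  have hFy : ∀ y ∈ Ioo a b, F y = (Ioo a y).indicator fun u ↦ f u y := by
    intro y hy
    ext u
    simp [hF, indicator, hy.2]
  have hFu : ∀ u ∈ Ioo a b, (fun y ↦ F y u) = (Ioo u b).indicator (f u) := by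
    intro u hu
    ext y
    simp [hF, indicator, hu.1]
  have hFm : Measurable (Function.uncurry F) := by
    refine Measurable.ite ?_ (hf.comp measurable_swap) measurable_const
    exact ((measurableSet_lt measurable_const measurable_snd).inter
      ((measurableSet_lt measurable_snd measurable_fst).inter
        (measurableSet_lt measurable_fst measurable_const)))
  have hF₀ : ∀ y u, 0 ≤ F y u := by
    intro y u
    simp only [hF]
    split_ifs with h
    exacts [hf₀ u y h.1 h.2.1 h.2.2, le_rfl]
  calc ∫ y in Ioo a b, ∫ u in Ioo a y, f u y
      = ∫ y in Ioo a b, ∫ u in Ioo a b, F y u := by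
        refine setIntegral_congr_fun measurableSet_Ioo fun y hy ↦ ?_
        rw [hFy y hy, setIntegral_indicator measurableSet_Ioo, Ioo_inter_Ioo, max_self,
          min_eq_right hy.2.le]
    _ = ∫ u in Ioo a b, ∫ y in Ioo a b, F y u := by
        refine integral_integral_swap_of_nonneg hFm.aestronglyMeasurable hF₀ ?_ ?_
        · refine ae_restrict_of_forall_mem measurableSet_Ioo fun y hy ↦ ?_
          rw [hFy y hy]
          exact ((integrable_indicator_iff measurableSet_Ioo).2 (hfu y hy)).restrict
        · refine ae_restrict_of_forall_mem measurableSet_Ioo fun u hu ↦ ?_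
          rw [hFu u hu]
          exact ((integrable_indicator_iff measurableSet_Ioo).2 (hfy u hu)).restrict
    _ = ∫ u in Ioo a b, ∫ y in Ioo u b, f u y := by
        refine setIntegral_congr_fun measurableSet_Ioo fun u hu ↦ ?_
        rw [hFu u hu, setIntegral_indicator measurableSet_Ioo, Ioo_inter_Ioo,
          max_eq_right hu.1.le, min_self]

theorem setIntegral_Ioo_zero_one_comp_mul_right (f : ℝ → ℝ) {c : ℝ} (hc : 0 < c) :
    ∫ x in Ioo 0 1, f (x * c) = c⁻¹ * ∫ u in Ioo 0 c, f u := by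
  rw [← integral_Ioc_eq_integral_Ioo, ← intervalIntegral.integral_of_le zero_le_one,
    intervalIntegral.integral_comp_mul_right f hc.ne', zero_mul, one_mul,
    intervalIntegral.integral_of_le hc.le, integral_Ioc_eq_integral_Ioo, smul_eq_mul]

theorem integral_sub_div_sq {a b : ℝ} (c : ℝ) (ha : 0 < a) (hb : 0 < b) :
    ∫ y in a..b, (y - c) / y ^ 2 = Real.log b - Real.log a + c / b - c / a := by
  have hpos : ∀ y ∈ uIcc a b, 0 < y := fun y hy ↦
    (lt_min ha hb).trans_le (by simpa using hy.1)
  have hderiv : ∀ y ∈ uIcc a b,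
      HasDerivAt (fun t ↦ Real.log t + c * t⁻¹) ((y - c) / y ^ 2) y := by
    intro y hy
    have hy₀ := (hpos y hy).ne'
    refine ((Real.hasDerivAt_log hy₀).add ((hasDerivAt_inv hy₀).const_mul c)).congr_deriv ?_
    field_simp
    ring
  have hint : IntervalIntegrable (fun y ↦ (y - c) / y ^ 2) volume a b :=
    (ContinuousOn.div (by fun_prop) (by fun_prop) fun y hy ↦ (pow_pos (hpos y hy) 2).ne')
      |>.intervalIntegrable
  rw [intervalIntegral.integral_eq_sub_of_hasDerivAt hderiv hint]
  ring

theorem integral_div_one_sub {a b : ℝ} (ha : a < 1) (hb : b < 1) :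
    ∫ v in a..b, v / (1 - v) = Real.log (1 - a) - Real.log (1 - b) - (b - a) := by
  have hpos : ∀ v ∈ uIcc a b, 0 < 1 - v := fun v hv ↦
    sub_pos.2 ((by simpa using hv.2 : v ≤ max a b).trans_lt (max_lt ha hb))
  have hderiv : ∀ v ∈ uIcc a b,
      HasDerivAt (fun t ↦ -Real.log (1 - t) - t) (v / (1 - v)) v := by
    intro v hv
    have hv₁ := (hpos v hv).ne'
    refine ((((Real.hasDerivAt_log hv₁).comp v ((hasDerivAt_id v).const_sub 1)).neg).sub
      (hasDerivAt_id v)).congr_deriv ?_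
    field_simp
    ring
  have hint : IntervalIntegrable (fun v ↦ v / (1 - v)) volume a b :=
    (ContinuousOn.div (by fun_prop) (by fun_prop) fun v hv ↦ (hpos v hv).ne')
      |>.intervalIntegrable
  rw [intervalIntegral.integral_eq_sub_of_hasDerivAt hderiv hint]
  ring

/-- The integrand of the left-hand side in the variables `u = x y` and `y`, including the
Jacobian `1 / y`. -/
noncomputable def substitutedIntegrand (u y : ℝ) : ℝ :=
  (y - u) / (y ^ 2 * ((1 - u) * -Real.log u))

theorem measurable_substitutedIntegrand : Measurable (Function.uncurry substitutedIntegrand) := by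
  unfold substitutedIntegrand Function.uncurry
  fun_prop

theorem substitutedIntegrand_nonneg {u y : ℝ} (hu₀ : 0 ≤ u) (hu₁ : u ≤ 1) (huy : u ≤ y) :
    0 ≤ substitutedIntegrand u y :=
  div_nonneg (sub_nonneg.2 huy) (mul_nonneg (sq_nonneg y)
    (mul_nonneg (sub_nonneg.2 hu₁) (neg_nonneg.2 (Real.log_nonpos hu₀ hu₁))))

theorem substitutedIntegrand_eq_div (u y : ℝ) :
    substitutedIntegrand u y = (y - u) / y ^ 2 / ((1 - u) * -Real.log u) :=
  (div_div _ _ _).symm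

theorem integral_Ioo_eq_integral_substitutedIntegrand {y : ℝ} (hy₀ : 0 < y) (hy₁ : y < 1) :
    ∫ x in Ioo (0 : ℝ) 1, -(1 - x) / ((1 - x * y) * Real.log (x * y)) =
      ∫ u in Ioo 0 y, substitutedIntegrand u y := by
  set f : ℝ → ℝ := fun u ↦ -(1 - u / y) / ((1 - u) * Real.log u)
  calc _ = ∫ x in Ioo (0 : ℝ) 1, f (x * y) := by
        simp only [f, mul_div_cancel_right₀ _ hy₀.ne']
    _ = ∫ u in Ioo 0 y, y⁻¹ * f u := by
        rw [setIntegral_Ioo_zero_one_comp_mul_right f hy₀, integral_const_mul]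
    _ = _ := by
        refine setIntegral_congr_fun measurableSet_Ioo fun u hu ↦ ?_
        have hu₁ : 1 - u ≠ 0 := by linarith [hu.2]
        have hlog : Real.log u ≠ 0 := (Real.log_neg hu.1 (hu.2.trans hy₁)).ne
        simp only [f, substitutedIntegrand]
        field_simp

theorem integrableOn_substitutedIntegrand_left {y : ℝ} (hy₀ : 0 < y) (hy₁ : y < 1) :
    IntegrableOn (fun u ↦ substitutedIntegrand u y) (Ioo 0 y) := by
  have hlog : 0 < -Real.log y := neg_pos.2 (Real.log_neg hy₀ hy₁)
  refine Measure.integrableOn_of_bounded (M := y / (y ^ 2 * ((1 - y) * -Real.log y)))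
    measure_Ioo_lt_top.ne
    (measurable_substitutedIntegrand.comp
      (measurable_id.prodMk measurable_const)).aestronglyMeasurable ?_
  refine ae_restrict_of_forall_mem measurableSet_Ioo fun u ⟨hu₀, huy⟩ ↦ ?_
  rw [Real.norm_of_nonneg (substitutedIntegrand_nonneg hu₀.le (huy.trans hy₁).le huy.le)]
  have hden : (1 - y) * -Real.log y ≤ (1 - u) * -Real.log u :=
    mul_le_mul (by linarith) (neg_le_neg (Real.log_le_log hu₀ huy.le)) hlog.le (by linarith)
  exact div_le_div₀ hy₀.le (by linarith) (by positivity) (by gcongr)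

theorem integrableOn_substitutedIntegrand_right {u : ℝ} (hu₀ : 0 < u) :
    IntegrableOn (substitutedIntegrand u) (Ioo u 1) := by
  refine (ContinuousOn.integrableOn_Icc ?_).mono_set Ioo_subset_Icc_self
  rw [show substitutedIntegrand u = _ from funext (substitutedIntegrand_eq_div u)]
  refine (ContinuousOn.div (by fun_prop) (by fun_prop) fun y hy ↦ ?_).div_const _
  exact (pow_pos (hu₀.trans_le hy.1) 2).ne'

theorem integral_substitutedIntegrand_right {u : ℝ} (hu₀ : 0 < u) (hu₁ : u ≤ 1) :
    ∫ y in Ioo u 1, substitutedIntegrand u y =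
      (-Real.log u - (1 - u)) / ((1 - u) * -Real.log u) := by
  simp only [substitutedIntegrand_eq_div]
  rw [integral_div, ← integral_Ioc_eq_integral_Ioo, ← intervalIntegral.integral_of_le hu₁,
    integral_sub_div_sq u hu₀ one_pos]
  congr 1
  simp only [Real.log_one, div_one, div_self hu₀.ne']
  ring

theorem integral_Ioo_neg_div_one_sub_mul_log {u : ℝ} (hu₀ : 0 < u) (hu₁ : u ≤ 1) :
    ∫ v in Ioo (0 : ℝ) (1 - u), -v / ((1 - v) * (1 - u) * Real.log u) =
      (-Real.log u - (1 - u)) / ((1 - u) * -Real.log u) := by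
  have hrw : ∀ v : ℝ, -v / ((1 - v) * (1 - u) * Real.log u) =
      v / (1 - v) / ((1 - u) * -Real.log u) := fun v ↦ by
    simp only [div_div, mul_neg, div_neg, neg_div, mul_assoc]
  simp only [hrw]
  rw [integral_div, ← integral_Ioc_eq_integral_Ioo,
    ← intervalIntegral.integral_of_le (sub_nonneg.2 hu₁),
    integral_div_one_sub one_pos (by linarith)]
  simp only [sub_zero, sub_sub_cancel, Real.log_one]
  ring

theorem stmt13 :
    (∫ y in Set.Ioo (0 : ℝ) 1, ∫ x in Set.Ioo (0 : ℝ) 1,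
        -(1 - x) / ((1 - x * y) * Real.log (x * y))) =
      ∫ u in Set.Ioo (0 : ℝ) 1, ∫ v in Set.Ioo (0 : ℝ) (1 - u),
        -v / ((1 - v) * (1 - u) * Real.log u) := by
  calc _ = ∫ y in Ioo (0 : ℝ) 1, ∫ u in Ioo 0 y, substitutedIntegrand u y :=
        setIntegral_congr_fun measurableSet_Ioo fun y hy ↦
          integral_Ioo_eq_integral_substitutedIntegrand hy.1 hy.2
    _ = ∫ u in Ioo (0 : ℝ) 1, ∫ y in Ioo u 1, substitutedIntegrand u y :=
        integral_Ioo_Ioo_swap measurable_substitutedIntegrand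
          (fun _ _ hu huy hy ↦ substitutedIntegrand_nonneg hu.le (huy.trans hy).le huy.le)
          (fun y hy ↦ integrableOn_substitutedIntegrand_left hy.1 hy.2)
          (fun u hu ↦ integrableOn_substitutedIntegrand_right hu.1)
    _ = _ := setIntegral_congr_fun measurableSet_Ioo fun u hu ↦ by
        rw [integral_substitutedIntegrand_right hu.1 hu.2.le,
          integral_Ioo_neg_div_one_sub_mul_log hu.1 hu.2.le]
end

section
/- For real t > 0 and integer n ≥ 1, termwise integration yields ∫_1^∞ n!/((n+1)·t(t+1)···(t+n)) dt = (1/(n+1)) Σ_{k=0}^n (−1)^{k+1} C(n,k) ln(k+1). -/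
/-!
The integrand is `n! / ((n+1) t(t+1)⋯(t+n))`, and `n! / t(t+1)⋯(t+n)` is, up to the sign `(-1)ⁿ`,
the `n`-th forward difference of `t ↦ 1/t`; expanding that difference gives the partial fraction
decomposition `∑ₖ (-1)ᵏ C(n,k) / (t+k)`. Integrating term by term, an antiderivative is
`F t = ∑ₖ (-1)ᵏ C(n,k) log (t+k)`. As `∑ₖ (-1)ᵏ C(n,k) = 0` for `n ≥ 1`, `F t` equals
`∑ₖ (-1)ᵏ C(n,k) (log (t+k) - log t)`, which tends to `0`, so the integral over `(1, ∞)` is `-F 1`.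
-/

open Finset fwdDiff

section PartialFractions

variable {K : Type*} [Field K]

theorem fwdDiff_iter_inv (n : ℕ) {x : K} (hx : ∀ k ≤ n, x + k ≠ 0) :
    (Δ_[1])^[n] (fun y : K ↦ y⁻¹) x = (-1) ^ n * n.factorial / ∏ k ∈ range (n + 1), (x + k) := by
  induction n generalizing x with
  | zero => simp
  | succ n ih =>
    have hx0 : ∀ k ≤ n, x + k ≠ 0 := fun k hk ↦ hx k (by omega)
    have hx1 : ∀ k ≤ n, x + 1 + k ≠ 0 := fun k hk ↦ by
      simpa [add_assoc, add_comm (1 : K)] using hx (k + 1) (by omega)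
    have hP : ∀ y : K, (∀ k ≤ n, y + k ≠ 0) → ∏ k ∈ range (n + 1), (y + k) ≠ 0 :=
      fun y hy ↦ prod_ne_zero_iff.2 fun k hk ↦ hy k (Nat.lt_succ_iff.1 (mem_range.1 hk))
    have hx_ne : x ≠ 0 := by simpa using hx 0 (Nat.zero_le _)
    have hP0 := hP x hx0
    have hP1 := hP (x + 1) hx1
    have hprod_left : ∏ k ∈ range (n + 2), (x + k) = x * ∏ k ∈ range (n + 1), (x + 1 + k) := by
      rw [prod_range_succ', mul_comm]; push_cast; simp [add_assoc, add_comm (1 : K)]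
    have hprod_right :
        ∏ k ∈ range (n + 2), (x + k) = (∏ k ∈ range (n + 1), (x + k)) * (x + (n + 1)) := by
      rw [prod_range_succ]; push_cast; rfl
    rw [Function.iterate_succ_apply', fwdDiff, ih hx1, ih hx0, hprod_left, Nat.factorial_succ]
    push_cast
    field_simp
    linear_combination -(-1) ^ n * (n.factorial : K) * (hprod_left.symm.trans hprod_right)

theorem sum_range_neg_one_pow_mul_choose_div (n : ℕ) {x : K} (hx : ∀ k ≤ n, x + k ≠ 0) :
    ∑ k ∈ range (n + 1), (-1) ^ k * n.choose k / (x + k) =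
      n.factorial / ∏ k ∈ range (n + 1), (x + k) := by
  calc ∑ k ∈ range (n + 1), (-1) ^ k * n.choose k / (x + k)
      = (-1) ^ n * ∑ k ∈ range (n + 1),
          ((-1 : ℤ) ^ (n - k) * n.choose k) • (fun y : K ↦ y⁻¹) (x + k • 1) := by
        rw [mul_sum]
        refine sum_congr rfl fun k hk ↦ ?_
        obtain ⟨j, rfl⟩ := Nat.exists_eq_add_of_le (Nat.lt_succ_iff.1 (mem_range.1 hk))
        simp only [Nat.add_sub_cancel_left, zsmul_eq_mul, nsmul_eq_mul, mul_one, pow_add]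
        push_cast
        ring_nf
        simp [pow_mul']
    _ = (-1) ^ n * ((-1) ^ n * n.factorial / ∏ k ∈ range (n + 1), (x + k)) := by
        rw [← fwdDiff_iter_eq_sum_shift, fwdDiff_iter_inv n hx]
    _ = n.factorial / ∏ k ∈ range (n + 1), (x + k) := by
        rw [← mul_div_assoc, ← mul_assoc, ← pow_add, ← two_mul, pow_mul]; simp

end PartialFractions

open Filter MeasureTheory Set Real Topology

theorem hasDerivAt_sum_neg_one_pow_mul_choose_mul_log (n : ℕ) {t : ℝ}
    (ht : ∀ k ≤ n, t + k ≠ 0) :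
    HasDerivAt (fun s ↦ ∑ k ∈ range (n + 1), (-1) ^ k * n.choose k * log (s + k))
      (n.factorial / ∏ k ∈ range (n + 1), (t + k)) t := by
  rw [← sum_range_neg_one_pow_mul_choose_div n ht]
  refine HasDerivAt.fun_sum fun k hk ↦ ?_
  simpa [div_eq_mul_inv] using (((hasDerivAt_id t).add_const (k : ℝ)).log
    (ht k (Nat.lt_succ_iff.1 (mem_range.1 hk)))).const_mul ((-1 : ℝ) ^ k * n.choose k)

theorem tendsto_sum_neg_one_pow_mul_choose_mul_log_atTop {n : ℕ} (hn : n ≠ 0) :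
    Tendsto (fun t : ℝ ↦ ∑ k ∈ range (n + 1), (-1) ^ k * n.choose k * log (t + k))
      atTop (𝓝 0) := by
  have hsum : ∑ k ∈ range (n + 1), (-1 : ℝ) ^ k * n.choose k = 0 := by
    exact_mod_cast Int.alternating_sum_range_choose_of_ne hn
  have hdiff : Tendsto (fun t : ℝ ↦
      ∑ k ∈ range (n + 1), (-1) ^ k * n.choose k * (log (t + k) - log t)) atTop (𝓝 0) := by
    simpa using tendsto_finsetSum _ fun (k : ℕ) _ ↦
      (tendsto_log_comp_add_sub_log k).const_mul ((-1 : ℝ) ^ k * n.choose k)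
  refine hdiff.congr fun t ↦ ?_
  simp only [mul_sub, sum_sub_distrib, ← sum_mul, hsum, zero_mul, sub_zero]

theorem integral_Ioi_factorial_div_prod {n : ℕ} (hn : n ≠ 0) {a : ℝ} (ha : 0 < a) :
    ∫ t in Ioi a, (n.factorial : ℝ) / ∏ k ∈ range (n + 1), (t + k) =
      -∑ k ∈ range (n + 1), (-1) ^ k * n.choose k * log (a + k) := by
  have hderiv : ∀ t ∈ Ici a, HasDerivAt
      (fun s ↦ ∑ k ∈ range (n + 1), (-1) ^ k * n.choose k * log (s + k))
      (n.factorial / ∏ k ∈ range (n + 1), (t + k)) t := fun t ht ↦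
    hasDerivAt_sum_neg_one_pow_mul_choose_mul_log n fun k _ ↦
      (add_pos_of_pos_of_nonneg (ha.trans_le ht) k.cast_nonneg).ne'
  -- nonnegativity of the integrand makes its integrability automatic once the antiderivative has a limit
  have hnonneg : ∀ t ∈ Ioi a, 0 ≤ (n.factorial : ℝ) / ∏ k ∈ range (n + 1), (t + k) :=
    fun t ht ↦ by have := ha.trans ht; positivity
  rw [integral_Ioi_of_hasDerivAt_of_nonneg' hderiv hnonneg
    (tendsto_sum_neg_one_pow_mul_choose_mul_log_atTop hn), zero_sub]

theorem stmt14 (n : ℕ) (hn : 1 ≤ n) :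
    (∫ t in Set.Ioi (1 : ℝ),
        (n.factorial : ℝ) / (((n : ℝ) + 1) * ∏ k ∈ Finset.range (n + 1), (t + k))) =
      (1 / ((n : ℝ) + 1)) *
        ∑ k ∈ Finset.range (n + 1),
          (-1 : ℝ) ^ (k + 1) * (n.choose k) * Real.log (k + 1) := by
  have hsplit : ∀ t : ℝ, (n.factorial : ℝ) / (((n : ℝ) + 1) * ∏ k ∈ range (n + 1), (t + k)) =
      1 / ((n : ℝ) + 1) * (n.factorial / ∏ k ∈ range (n + 1), (t + k)) := fun t ↦ by
    rw [div_mul_eq_div_div_swap, one_div_mul_eq_div]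
  simp_rw [hsplit]
  rw [integral_const_mul, integral_Ioi_factorial_div_prod (by omega) one_pos, ← sum_neg_distrib]
  congr 1
  refine sum_congr rfl fun k _ ↦ ?_
  rw [add_comm (1 : ℝ)]
  ring
end

section
/- e^γ equals the infinite product ∏_{n=1}^∞ (∏_{k=0}^n (k+1)^{(−1)^{k+1} C(n,k)})^{1/(n+1)}, i.e., the partial products converge to e^γ. -/
/-!
Taking logarithms, the claim is Ser's series `γ = ∑_{n ≥ 1} a n` with
`a n = (n + 1)⁻¹ ∑_k (-1)^(k+1) C(n,k) log (k + 1)`.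
By Fubini, `log (k + 1) = ∫₀¹ (1 - t^k) / (-log t) dt`, and the binomial theorem turns the
alternating sum of the numerators into `(1 - t)^n`, so `a n = (n + 1)⁻¹ ∫₀¹ (1 - t)^n / (-log t) dt`.
These integrands are nonnegative, and summing `∑_{n ≥ 1} x^n / (n + 1) = -log (1 - x) / x - 1` at
`x = 1 - t` gives the kernel `1 / (1 - t) + 1 / log t`. Its integral is `γ`, because against
`1 - t^n` it integrates to `H_n - log (n + 1)`.
-/

open MeasureTheory Real Filter Set Topology

theorem HasSum.tendsto_sum_Icc_one {M : Type*} [AddCommMonoid M] [TopologicalSpace M]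
    {f : ℕ → M} {a : M} (h : HasSum (fun n => f (n + 1)) a) :
    Tendsto (fun N => ∑ n ∈ Finset.Icc 1 N, f n) atTop (𝓝 a) := by
  convert h.tendsto_sum_nat using 2 with N
  rw [← Finset.Ico_add_one_right_eq_Icc, Finset.sum_Ico_eq_sum_range]
  simp [add_comm]

theorem hasSum_integral_of_nonneg {α ι : Type*} [MeasurableSpace α] [Countable ι]
    {μ : Measure α} {F : ι → α → ℝ} {f : α → ℝ}
    (hF_meas : ∀ n, AEStronglyMeasurable (F n) μ) (hF_nonneg : ∀ n, 0 ≤ᵐ[μ] F n)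
    (hf : Integrable f μ) (h_lim : ∀ᵐ a ∂μ, HasSum (fun n => F n a) (f a)) :
    HasSum (fun n => ∫ a, F n a ∂μ) (∫ a, f a ∂μ) := by
  refine hasSum_integral_of_dominated_convergence F hF_meas (fun n => ?_)
    (h_lim.mono fun a ha => ha.summable) (hf.congr ?_) h_lim
  · filter_upwards [hF_nonneg n] with a ha using (norm_of_nonneg ha).le
  · filter_upwards [h_lim] with a ha using ha.tsum_eq.symm

theorem integrableOn_Ioo_of_norm_le {f : ℝ → ℝ} {a b : ℝ} (hf : Measurable f) (C : ℝ)
    (hC : ∀ t ∈ Ioo a b, ‖f t‖ ≤ C) : IntegrableOn f (Ioo a b) :=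
  Measure.integrableOn_of_bounded (by simp) hf.aestronglyMeasurable
    ((ae_restrict_iff' measurableSet_Ioo).2 (ae_of_all _ hC))

theorem one_sub_rpow_le_mul_neg_log {t : ℝ} (ht : 0 < t) (s : ℝ) : 1 - t ^ s ≤ s * -log t := by
  have := add_one_le_exp (log t * s)
  rw [← rpow_def_of_pos ht] at this
  linarith

theorem one_sub_le_neg_log {t : ℝ} (ht : 0 < t) : 1 - t ≤ -log t := by
  simpa using one_sub_rpow_le_mul_neg_log ht 1

theorem integral_one_sub_rpow_div_neg_log {s : ℝ} (hs : 0 ≤ s) :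
    ∫ t in Ioo 0 1, (1 - t ^ s) / -log t = log (s + 1) := by
  have hint : Integrable (Function.uncurry fun t u : ℝ => t ^ u)
      ((volume.restrict (Ioo 0 1)).prod (volume.restrict (Ioc 0 s))) := by
    refine (integrable_const (1 : ℝ)).mono' (Measurable.aestronglyMeasurable (by fun_prop)) ?_
    rw [Measure.prod_restrict, ae_restrict_iff' (measurableSet_Ioo.prod measurableSet_Ioc)]
    refine ae_of_all _ fun p ⟨⟨ht0, ht1⟩, hu, _⟩ => ?_
    rw [Function.uncurry_apply_pair, norm_of_nonneg (rpow_nonneg ht0.le _)]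
    exact rpow_le_one ht0.le ht1.le hu.le
  have inner_u : ∀ t ∈ Ioo (0 : ℝ) 1, ∫ u in Ioc 0 s, t ^ u = (1 - t ^ s) / -log t := by
    intro t ⟨ht0, ht1⟩
    have hlog : log t ≠ 0 := (log_neg ht0 ht1).ne
    rw [← intervalIntegral.integral_of_le hs, intervalIntegral.integral_eq_sub_of_hasDerivAt
      (f := fun u => t ^ u / log t) (fun u _ => ?_)
      ((continuous_const_rpow ht0.ne').intervalIntegrable _ _)]
    · field_simp
      simp
    · simpa [hlog] using (hasStrictDerivAt_const_rpow ht0 u).hasDerivAt.div_const (log t)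
  have inner_t : ∀ u ∈ Ioc 0 s, ∫ t in Ioo (0 : ℝ) 1, t ^ u = 1 / (u + 1) := by
    intro u hu
    rw [← integral_Ioc_eq_integral_Ioo, ← intervalIntegral.integral_of_le zero_le_one,
      integral_rpow (Or.inl (by linarith [hu.1])), one_rpow, zero_rpow (by linarith [hu.1])]
    ring
  calc ∫ t in Ioo 0 1, (1 - t ^ s) / -log t = ∫ t in Ioo 0 1, ∫ u in Ioc 0 s, t ^ u :=
        (setIntegral_congr_fun measurableSet_Ioo inner_u).symm
    _ = ∫ u in Ioc 0 s, ∫ t in Ioo 0 1, t ^ u := integral_integral_swap hint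
    _ = ∫ u in (0)..s, 1 / (u + 1) := by
        rw [intervalIntegral.integral_of_le hs]
        exact setIntegral_congr_fun measurableSet_Ioc inner_t
    _ = log (s + 1) := by
        rw [intervalIntegral.integral_comp_add_right (fun u => 1 / u), integral_one_div]
        · simp
        · rw [mem_uIcc]
          rintro (⟨h, _⟩ | ⟨h, _⟩) <;> linarith

theorem integrableOn_one_sub_rpow_div_neg_log {s : ℝ} (hs : 0 ≤ s) :
    IntegrableOn (fun t => (1 - t ^ s) / -log t) (Ioo 0 1) := by
  refine integrableOn_Ioo_of_norm_le (by fun_prop) s fun t ⟨ht0, ht1⟩ => ?_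
  have hlog : 0 < -log t := neg_pos.2 (log_neg ht0 ht1)
  rw [norm_of_nonneg (div_nonneg (by linarith [rpow_le_one ht0.le ht1.le hs]) hlog.le),
    div_le_iff₀ hlog]
  exact one_sub_rpow_le_mul_neg_log ht0 s

theorem integral_one_sub_pow_div_neg_log (k : ℕ) :
    ∫ t in Ioo 0 1, (1 - t ^ k) / -log t = log (k + 1) := by
  simpa using integral_one_sub_rpow_div_neg_log k.cast_nonneg

theorem integrableOn_one_sub_pow_div_neg_log (k : ℕ) :
    IntegrableOn (fun t => (1 - t ^ k) / -log t) (Ioo 0 1) := by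
  simpa using integrableOn_one_sub_rpow_div_neg_log k.cast_nonneg

theorem sum_neg_one_pow_mul_choose_mul_one_sub_pow {R : Type*} [CommRing R] {n : ℕ} (hn : n ≠ 0)
    (x : R) : ∑ k ∈ Finset.range (n + 1), (-1) ^ (k + 1) * (n.choose k : R) * (1 - x ^ k) =
      (1 - x) ^ n := by
  have h : ∀ k, (-1 : R) ^ (k + 1) * n.choose k * (1 - x ^ k) =
      (-x) ^ k * 1 ^ (n - k) * n.choose k - (-1) ^ k * 1 ^ (n - k) * n.choose k := by
    intro k
    rw [neg_pow x k]
    ring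
  simp only [h, Finset.sum_sub_distrib, ← add_pow, neg_add_cancel, zero_pow hn, sub_zero]
  ring

theorem integral_pow_one_sub_div_neg_log {n : ℕ} (hn : n ≠ 0) :
    ∫ t in Ioo 0 1, (1 - t) ^ n / -log t =
      ∑ k ∈ Finset.range (n + 1), (-1) ^ (k + 1) * n.choose k * log (k + 1) := by
  calc ∫ t in Ioo 0 1, (1 - t) ^ n / -log t
      = ∫ t in Ioo 0 1, ∑ k ∈ Finset.range (n + 1),
          (-1) ^ (k + 1) * n.choose k * ((1 - t ^ k) / -log t) := by
        congr 1 with t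
        simp only [← mul_div_assoc, ← Finset.sum_div,
          sum_neg_one_pow_mul_choose_mul_one_sub_pow hn]
    _ = _ := by
        rw [integral_finsetSum _ fun k _ => (integrableOn_one_sub_pow_div_neg_log k).const_mul _]
        simp only [integral_const_mul, integral_one_sub_pow_div_neg_log]

noncomputable def eulerKernel (t : ℝ) : ℝ := 1 / (1 - t) + 1 / log t

theorem eulerKernel_eq (t : ℝ) : eulerKernel t = 1 / (1 - t) - 1 / -log t := by
  rw [eulerKernel, one_div_neg_eq_neg_one_div, sub_neg_eq_add]

@[fun_prop]
theorem measurable_eulerKernel : Measurable eulerKernel := by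
  unfold eulerKernel
  fun_prop

theorem eulerKernel_nonneg {t : ℝ} (ht : t ∈ Ioo 0 1) : 0 ≤ eulerKernel t := by
  rw [eulerKernel_eq, sub_nonneg]
  exact one_div_le_one_div_of_le (by linarith [ht.2]) (one_sub_le_neg_log ht.1)

theorem eulerKernel_le_one {t : ℝ} (ht : t ∈ Ioo 0 1) : eulerKernel t ≤ 1 := by
  obtain ⟨ht0, ht1⟩ := ht
  have hlog : 0 < -log t := neg_pos.2 (log_neg ht0 ht1)
  have h : t * -log t ≤ 1 - t := by
    have := mul_le_mul_of_nonneg_left (log_le_sub_one_of_pos (inv_pos.2 ht0)) ht0.le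
    rwa [log_inv, mul_sub, mul_inv_cancel₀ ht0.ne', mul_one] at this
  rw [eulerKernel_eq, div_sub_div _ _ (by linarith) hlog.ne', div_le_one (by nlinarith)]
  nlinarith

theorem integrableOn_eulerKernel : IntegrableOn eulerKernel (Ioo 0 1) :=
  integrableOn_Ioo_of_norm_le measurable_eulerKernel 1 fun t ht => by
    rw [norm_of_nonneg (eulerKernel_nonneg ht)]
    exact eulerKernel_le_one ht

theorem integral_geom_sum (n : ℕ) :
    ∫ t in Ioo (0 : ℝ) 1, ∑ k ∈ Finset.range n, t ^ k = harmonic n := by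
  rw [← integral_Ioc_eq_integral_Ioo, ← intervalIntegral.integral_of_le zero_le_one,
    intervalIntegral.integral_finsetSum fun k _ => (continuous_pow k).intervalIntegrable _ _]
  simp [harmonic, integral_pow, div_eq_inv_mul]

theorem one_sub_pow_mul_eulerKernel {t : ℝ} (ht : t ∈ Ioo 0 1) (n : ℕ) :
    (1 - t ^ n) * eulerKernel t = ∑ k ∈ Finset.range n, t ^ k - (1 - t ^ n) / -log t := by
  rw [eulerKernel_eq, geom_sum_eq ht.2.ne, mul_sub, ← neg_div_neg_eq (t ^ n - 1)]
  ring

theorem integral_one_sub_pow_mul_eulerKernel (n : ℕ) :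
    ∫ t in Ioo 0 1, (1 - t ^ n) * eulerKernel t = eulerMascheroniSeq n := by
  rw [setIntegral_congr_fun measurableSet_Ioo fun t ht => one_sub_pow_mul_eulerKernel ht n,
    integral_sub, integral_geom_sum, integral_one_sub_pow_div_neg_log, eulerMascheroniSeq]
  · exact (continuous_finsetSum _ fun k _ => continuous_pow k).integrableOn_Icc.mono_set
      Ioo_subset_Icc_self
  · exact integrableOn_one_sub_pow_div_neg_log n

theorem integral_eulerKernel : ∫ t in Ioo 0 1, eulerKernel t = eulerMascheroniConstant := by
  have h_lim : Tendsto (fun n : ℕ => ∫ t in Ioo 0 1, (1 - t ^ n) * eulerKernel t) atTop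
      (𝓝 (∫ t in Ioo 0 1, eulerKernel t)) := by
    refine tendsto_integral_of_dominated_convergence eulerKernel
      (fun n => (Measurable.aestronglyMeasurable (by fun_prop)))
      integrableOn_eulerKernel (fun n => ?_) ?_
    all_goals
      rw [ae_restrict_iff' measurableSet_Ioo]
      refine ae_of_all _ fun t ht => ?_
    · have hpow := pow_le_one₀ ht.1.le ht.2.le (n := n)
      have hpow_nonneg := pow_nonneg ht.1.le n
      rw [norm_mul, norm_of_nonneg (by linarith), norm_of_nonneg (eulerKernel_nonneg ht)]
      exact mul_le_of_le_one_left (eulerKernel_nonneg ht) (by linarith)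
    · simpa using ((tendsto_pow_atTop_nhds_zero_of_lt_one ht.1.le ht.2).const_sub 1).mul_const
        (eulerKernel t)
  simp_rw [integral_one_sub_pow_mul_eulerKernel] at h_lim
  exact tendsto_nhds_unique h_lim tendsto_eulerMascheroniSeq

theorem hasSum_pow_one_sub_div_neg_log {t : ℝ} (ht : t ∈ Ioo 0 1) :
    HasSum (fun n : ℕ => 1 / ((n : ℝ) + 2) * ((1 - t) ^ (n + 1) / -log t)) (eulerKernel t) := by
  obtain ⟨ht0, ht1⟩ := ht
  have hlog : log t ≠ 0 := (log_neg ht0 ht1).ne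
  have h := ((hasSum_nat_add_iff' 1).2 (hasSum_pow_div_log_of_abs_lt_one
    (abs_lt.2 ⟨by linarith, by linarith⟩ : |1 - t| < 1))).div_const ((1 - t) * -log t)
  have hsum : (-log (1 - (1 - t)) - ∑ i ∈ Finset.range 1, (1 - t) ^ (i + 1) / (i + 1)) /
      ((1 - t) * -log t) = eulerKernel t := by
    rw [eulerKernel_eq, sub_sub_cancel, Finset.sum_range_one]
    field_simp
    ring
  have hterm : ∀ n : ℕ, (1 - t) ^ (n + 1 + 1) / ((n + 1 : ℕ) + 1) / ((1 - t) * -log t) =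
      1 / ((n : ℝ) + 2) * ((1 - t) ^ (n + 1) / -log t) := fun n => by
    push_cast
    field_simp
    ring
  rw [hsum] at h
  simpa only [hterm] using h

-- The terms of Ser's series for `γ`.
noncomputable def serTerm (n : ℕ) : ℝ :=
  1 / ((n : ℝ) + 1) * ∑ k ∈ Finset.range (n + 1), (-1) ^ (k + 1) * n.choose k * log (k + 1)

theorem hasSum_serTerm_succ : HasSum (fun n => serTerm (n + 1)) eulerMascheroniConstant := by
  have h := hasSum_integral_of_nonneg (μ := volume.restrict (Ioo 0 1))
    (F := fun (n : ℕ) t => 1 / ((n : ℝ) + 2) * ((1 - t) ^ (n + 1) / -log t))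
    (fun n => Measurable.aestronglyMeasurable (by fun_prop)) (fun n => ?_)
    integrableOn_eulerKernel ((ae_restrict_iff' measurableSet_Ioo).2
      (ae_of_all _ fun t ht => hasSum_pow_one_sub_div_neg_log ht))
  · rw [integral_eulerKernel] at h
    convert h using 2 with n
    rw [integral_const_mul, integral_pow_one_sub_div_neg_log n.succ_ne_zero, serTerm]
    push_cast
    ring
  · rw [EventuallyLE, ae_restrict_iff' measurableSet_Ioo]
    refine ae_of_all _ fun t ⟨ht0, ht1⟩ => ?_
    have hlog : 0 < -log t := neg_pos.2 (log_neg ht0 ht1)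
    have hx : 0 < 1 - t := by linarith
    simp only [Pi.zero_apply]
    positivity

theorem rpow_prod_zpow_eq_exp_serTerm (n : ℕ) :
    (∏ k ∈ Finset.range (n + 1), ((k : ℝ) + 1) ^ ((-1 : ℤ) ^ (k + 1) * (n.choose k : ℤ))) ^
      ((1 : ℝ) / ((n : ℝ) + 1)) = exp (serTerm n) := by
  rw [rpow_def_of_pos (Finset.prod_pos fun k _ => zpow_pos (by positivity) _),
    log_prod fun k _ => (zpow_pos (by positivity) _).ne', serTerm, mul_comm]
  simp_rw [log_zpow]
  push_cast
  rfl

theorem stmt16 :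
    Filter.Tendsto
      (fun N : ℕ => ∏ n ∈ Finset.Icc 1 N,
        (∏ k ∈ Finset.range (n + 1),
            ((k : ℝ) + 1) ^ ((-1 : ℤ) ^ (k + 1) * (n.choose k : ℤ))) ^
          ((1 : ℝ) / ((n : ℝ) + 1)))
      Filter.atTop (nhds (Real.exp Real.eulerMascheroniConstant)) := by
  simp_rw [rpow_prod_zpow_eq_exp_serTerm, ← exp_sum]
  exact (continuous_exp.tendsto _).comp hasSum_serTerm_succ.tendsto_sum_Icc_one
end

section
/- For every real t > 0, ψ'(t) − 1/t = Σ_{n=1}^∞ n!/((n+1)·t(t+1)···(t+n)), where ψ is the digamma function. -/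
/-!
Both `ψ'(t) = ∑ₖ 1 / (t + k)²` and `F(t) = ∑ₙ n! / ((n + 1) t (t + 1) ⋯ (t + n))` satisfy
`f t - f (t + 1) = 1 / t²` and tend to `0` along `t + ℕ`, hence agree; the `n = 0` term of
`F(t)` is `1 / t`.

The series for `ψ'` comes from `ψ x - ψ y = ∑ₖ (1 / (y + k) - 1 / (x + k))`, obtained by
telescoping `ψ (x + 1) = ψ x + 1 / x`; the remainder `ψ (x + N) - ψ (y + N)` vanishes because `ψ`
is monotone (`log Γ` is convex). For `F`, the difference
`F(t) - F(t + 1) = ∑ₙ n! / (t ⋯ (t + n + 1))` telescopes as well, since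
`n! / (t ⋯ (t + n)) = Γₙ(t) / n^t → 0` by Euler's limit formula.
-/

noncomputable def digamma (x : ℝ) : ℝ := deriv (fun y : ℝ => Real.log (Real.Gamma y)) x

open Real Filter Topology Set Finset
open scoped Nat

lemma hasSum_sub_succ_of_antitone {b : ℕ → ℝ} {l : ℝ} (hb : Antitone b)
    (hl : Tendsto b atTop (𝓝 l)) : HasSum (fun n => b n - b (n + 1)) (b 0 - l) := by
  rw [hasSum_iff_tendsto_nat_of_nonneg (fun n => sub_nonneg.2 (hb n.le_succ))]
  simp_rw [Finset.sum_range_sub']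
  exact tendsto_const_nhds.sub hl

lemma eq_of_sub_add_one_eq_of_tendsto_zero {f g : ℝ → ℝ} {t : ℝ}
    (hfg : ∀ N : ℕ, f (t + N) - f (t + N + 1) = g (t + N) - g (t + N + 1))
    (hf : Tendsto (fun N : ℕ => f (t + N)) atTop (𝓝 0))
    (hg : Tendsto (fun N : ℕ => g (t + N)) atTop (𝓝 0)) : f t = g t := by
  have hconst : ∀ N : ℕ, f (t + N) - g (t + N) = f t - g t := by
    intro N
    induction N with
    | zero => simp
    | succ N ih =>
      rw [Nat.cast_succ, ← add_assoc, ← ih]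
      linarith [hfg N]
  have hlim := hf.sub hg
  simp only [hconst, sub_zero] at hlim
  exact sub_eq_zero.1 (tendsto_nhds_unique tendsto_const_nhds hlim)

lemma differentiableAt_log_Gamma {x : ℝ} (hx : 0 < x) :
    DifferentiableAt ℝ (fun y => log (Gamma y)) x :=
  (differentiableAt_Gamma fun m => by linarith [m.cast_nonneg (α := ℝ)]).log
    (Gamma_pos_of_pos hx).ne'

lemma digamma_add_one {x : ℝ} (hx : 0 < x) : digamma (x + 1) = digamma x + 1 / x := by
  unfold digamma
  rw [← deriv_comp_add_const, one_div, ← Real.deriv_log,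
    ← deriv_add (differentiableAt_log_Gamma hx) (differentiableAt_log hx.ne')]
  apply EventuallyEq.deriv_eq
  filter_upwards [eventually_gt_nhds hx] with y hy
  simp only [Gamma_add_one hy.ne', log_mul hy.ne' (Gamma_pos_of_pos hy).ne', add_comm,
    Pi.add_apply]

lemma monotoneOn_digamma : MonotoneOn digamma (Ioi 0) :=
  convexOn_log_Gamma.monotoneOn_deriv fun _ hx => differentiableAt_log_Gamma hx

lemma digamma_add_nat_sub_le {a : ℝ} (ha : 0 < a) (m : ℕ) :
    digamma (a + m) - digamma a ≤ m / a := by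
  induction m with
  | zero => simp
  | succ m ih =>
    have hstep : 1 / (a + m) ≤ 1 / a := one_div_le_one_div_of_le ha (by simp)
    rw [Nat.cast_succ, ← add_assoc, digamma_add_one (by positivity), add_div]
    linarith

lemma tendsto_digamma_add_nat_sub {x y : ℝ} (hy : 0 < y) (hyx : y ≤ x) :
    Tendsto (fun N : ℕ => digamma (x + N) - digamma (y + N)) atTop (𝓝 0) := by
  have hx : 0 < x := hy.trans_le hyx
  set m := ⌈x - y⌉₊
  have hm : x ≤ y + m := by linarith [Nat.le_ceil (x - y)]
  have hlim : Tendsto (fun N : ℕ => m / (y + N)) atTop (𝓝 0) :=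
    tendsto_const_nhds.div_atTop (tendsto_atTop_add_const_left _ _ tendsto_natCast_atTop_atTop)
  refine tendsto_of_tendsto_of_tendsto_of_le_of_le tendsto_const_nhds hlim (fun N => ?_)
    (fun N => ?_)
  · exact sub_nonneg.2 (monotoneOn_digamma (mem_Ioi.2 (by positivity)) (mem_Ioi.2 (by positivity))
      (by linarith))
  · have hle : digamma (x + N) ≤ digamma (y + N + m) :=
      monotoneOn_digamma (mem_Ioi.2 (by positivity)) (mem_Ioi.2 (by positivity)) (by linarith)
    have := digamma_add_nat_sub_le (a := y + N) (by positivity) m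
    simp only
    linarith

lemma hasSum_digamma_sub {x y : ℝ} (hy : 0 < y) (hyx : y ≤ x) :
    HasSum (fun k : ℕ => 1 / (y + k) - 1 / (x + k)) (digamma x - digamma y) := by
  have hx : 0 < x := hy.trans_le hyx
  convert hasSum_sub_succ_of_antitone (b := fun N : ℕ => digamma (x + N) - digamma (y + N))
    (l := 0) ?_ (tendsto_digamma_add_nat_sub hy hyx) using 1
  · ext k
    simp only [Nat.cast_succ, ← add_assoc, digamma_add_one (by positivity : 0 < x + k),
      digamma_add_one (by positivity : 0 < y + k)]
    ring
  · simp
  · refine antitone_nat_of_succ_le fun k => ?_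
    simp only [Nat.cast_succ, ← add_assoc, digamma_add_one (by positivity : 0 < x + k),
      digamma_add_one (by positivity : 0 < y + k)]
    have : 1 / (x + k) ≤ 1 / (y + k) := one_div_le_one_div_of_le (by positivity) (by linarith)
    linarith

lemma summable_one_div_add_sq {a : ℝ} (ha : 0 < a) :
    Summable fun k : ℕ => 1 / (a + k) ^ 2 := by
  refine ((Real.summable_one_div_nat_add_rpow a 2).2 one_lt_two).congr fun k => ?_
  rw [abs_of_pos (by positivity), add_comm, Real.rpow_two]

lemma hasDerivAt_digamma {t : ℝ} (ht : 0 < t) :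
    HasDerivAt digamma (∑' k : ℕ, 1 / (t + k) ^ 2) t := by
  -- `hasSum_digamma_sub` needs its base point below `z`, for all `z` near `t`
  have ht2 : 0 < t / 2 := half_pos ht
  have hts : t ∈ Ioi (t / 2) := half_lt_self ht
  have hderiv : ∀ (k : ℕ) (z : ℝ), z ∈ Ioi (t / 2) →
      HasDerivAt (fun z => 1 / (t / 2 + k) - 1 / (z + k)) (1 / (z + k) ^ 2) z := by
    intro k z hz
    have hzk : z + k ≠ 0 := by have : (0 : ℝ) < z := ht2.trans hz; positivity
    simpa [one_div, neg_div] using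
      (((hasDerivAt_id z).add_const (k : ℝ)).inv hzk).const_sub (1 / (t / 2 + k))
  have hbound : ∀ (k : ℕ) (z : ℝ), z ∈ Ioi (t / 2) →
      ‖1 / (z + k) ^ 2‖ ≤ 1 / (t / 2 + k) ^ 2 := by
    intro k z hz
    rw [Real.norm_of_nonneg (by have : (0 : ℝ) < z := ht2.trans hz; positivity)]
    exact one_div_le_one_div_of_le (by positivity)
      (pow_le_pow_left₀ (by positivity) (by linarith [mem_Ioi.1 hz]) 2)
  have hseries := hasDerivAt_tsum_of_isPreconnected (summable_one_div_add_sq ht2) isOpen_Ioi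
    isPreconnected_Ioi hderiv hbound hts (hasSum_digamma_sub ht2 hts.le).summable hts
  refine (hseries.const_add (digamma (t / 2))).congr_of_eventuallyEq ?_
  filter_upwards [isOpen_Ioi.mem_nhds hts] with z hz
  rw [(hasSum_digamma_sub ht2 (le_of_lt hz)).tsum_eq]
  ring

noncomputable def risingProd (t : ℝ) (n : ℕ) : ℝ := ∏ k ∈ range (n + 1), (t + k)

noncomputable def factorialSeriesTerm (t : ℝ) (n : ℕ) : ℝ :=
  n ! / ((n + 1) * risingProd t n)

section

variable {t : ℝ}

lemma risingProd_pos (ht : 0 < t) (n : ℕ) : 0 < risingProd t n :=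
  prod_pos fun _ _ => by positivity

lemma risingProd_zero (t : ℝ) : risingProd t 0 = t := by simp [risingProd]

lemma risingProd_succ (t : ℝ) (n : ℕ) :
    risingProd t (n + 1) = risingProd t n * (t + n + 1) := by
  rw [risingProd, prod_range_succ, ← risingProd]
  push_cast
  ring

lemma mul_risingProd_add_one (t : ℝ) (n : ℕ) :
    t * risingProd (t + 1) n = risingProd t (n + 1) := by
  rw [risingProd, risingProd, prod_range_succ' _ (n + 1)]
  push_cast
  simp only [add_zero, mul_comm t, add_assoc, add_comm (1 : ℝ)]

lemma factorial_div_risingProd_eq {n : ℕ} (hn : n ≠ 0) :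
    (n ! : ℝ) / risingProd t n = GammaSeq t n / (n : ℝ) ^ t := by
  have : (0 : ℝ) < (n : ℝ) ^ t := rpow_pos_of_pos (by positivity) t
  rw [GammaSeq, risingProd]
  field_simp

lemma tendsto_factorial_div_risingProd (ht : 0 < t) :
    Tendsto (fun n : ℕ => (n ! : ℝ) / risingProd t n) atTop (𝓝 0) := by
  have hpow : Tendsto (fun n : ℕ => ((n : ℝ) ^ t)⁻¹) atTop (𝓝 0) :=
    tendsto_inv_atTop_zero.comp ((tendsto_rpow_atTop ht).comp tendsto_natCast_atTop_atTop)
  have := (GammaSeq_tendsto_Gamma t).mul hpow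
  rw [mul_zero] at this
  refine this.congr' ?_
  filter_upwards [eventually_ne_atTop 0] with n hn
  rw [factorial_div_risingProd_eq hn, div_eq_mul_inv]

lemma factorial_div_risingProd_sub_succ (ht : 0 < t) (n : ℕ) :
    (n ! : ℝ) / risingProd t n - (n + 1)! / risingProd t (n + 1) =
      t * (n ! / risingProd t (n + 1)) := by
  have := risingProd_pos ht n
  rw [risingProd_succ, Nat.factorial_succ]
  push_cast
  field_simp
  ring

lemma hasSum_factorial_div_risingProd_succ (ht : 0 < t) :
    HasSum (fun n : ℕ => (n ! : ℝ) / risingProd t (n + 1)) (1 / t ^ 2) := by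
  have h := hasSum_sub_succ_of_antitone ?_ (tendsto_factorial_div_risingProd ht)
  · have h' := h.div_const t
    simp only [factorial_div_risingProd_sub_succ ht, mul_div_cancel_left₀ _ ht.ne',
      risingProd_zero, Nat.factorial_zero, Nat.cast_one, sub_zero] at h'
    rwa [div_div, ← sq] at h'
  · refine antitone_nat_of_succ_le fun n => sub_nonneg.1 ?_
    rw [factorial_div_risingProd_sub_succ ht]
    have := risingProd_pos ht (n + 1)
    positivity

lemma factorialSeriesTerm_sub_add_one (ht : 0 < t) (n : ℕ) :
    factorialSeriesTerm t n - factorialSeriesTerm (t + 1) n = n ! / risingProd t (n + 1) := by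
  have hP := risingProd_pos ht n
  have hshift : risingProd (t + 1) n = risingProd t n * (t + n + 1) / t := by
    rw [eq_div_iff ht.ne', mul_comm, mul_risingProd_add_one, risingProd_succ]
  unfold factorialSeriesTerm
  rw [hshift, risingProd_succ]
  field_simp
  ring

lemma factorialSeriesTerm_nonneg (ht : 0 < t) (n : ℕ) : 0 ≤ factorialSeriesTerm t n := by
  have := risingProd_pos ht n
  unfold factorialSeriesTerm
  positivity

lemma factorialSeriesTerm_le (ht : 0 < t) (n : ℕ) :
    factorialSeriesTerm t n ≤ (1 + t) * (n ! / risingProd t (n + 1)) := by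
  have := risingProd_pos ht n
  unfold factorialSeriesTerm
  rw [risingProd_succ]
  field_simp
  nlinarith [n.cast_nonneg (α := ℝ)]

lemma summable_factorialSeriesTerm (ht : 0 < t) : Summable (factorialSeriesTerm t) :=
  .of_nonneg_of_le (factorialSeriesTerm_nonneg ht) (factorialSeriesTerm_le ht)
    ((hasSum_factorial_div_risingProd_succ ht).summable.mul_left _)

lemma tsum_factorialSeriesTerm_le (ht : 0 < t) :
    ∑' n, factorialSeriesTerm t n ≤ (1 + t) / t ^ 2 := by
  rw [div_eq_mul_one_div, ← ((hasSum_factorial_div_risingProd_succ ht).mul_left (1 + t)).tsum_eq]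
  exact (summable_factorialSeriesTerm ht).tsum_le_tsum (factorialSeriesTerm_le ht)
    ((hasSum_factorial_div_risingProd_succ ht).summable.mul_left _)

lemma tsum_factorialSeriesTerm_sub_add_one (ht : 0 < t) :
    ∑' n, factorialSeriesTerm t n - ∑' n, factorialSeriesTerm (t + 1) n = 1 / t ^ 2 := by
  rw [← (summable_factorialSeriesTerm ht).tsum_sub
    (summable_factorialSeriesTerm (by linarith)),
    ← (hasSum_factorial_div_risingProd_succ ht).tsum_eq]
  exact tsum_congr (factorialSeriesTerm_sub_add_one ht)

end

lemma tsum_one_div_add_sq_sub_add_one {a : ℝ} (ha : 0 < a) :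
    ∑' k : ℕ, 1 / (a + k) ^ 2 - ∑' k : ℕ, 1 / (a + 1 + k) ^ 2 = 1 / a ^ 2 := by
  rw [(summable_one_div_add_sq ha).tsum_eq_zero_add]
  simp [add_assoc, add_comm (1 : ℝ)]

lemma tendsto_tsum_one_div_add_nat_add_sq (t : ℝ) :
    Tendsto (fun N : ℕ => ∑' k : ℕ, 1 / (t + N + k) ^ 2) atTop (𝓝 0) := by
  refine (tendsto_sum_nat_add fun k : ℕ => 1 / (t + k) ^ 2).congr fun N => tsum_congr fun k => ?_
  push_cast
  ring_nf

lemma tendsto_tsum_factorialSeriesTerm_add_nat {t : ℝ} (ht : 0 < t) :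
    Tendsto (fun N : ℕ => ∑' n, factorialSeriesTerm (t + N) n) atTop (𝓝 0) := by
  have hbound : Tendsto (fun s : ℝ => (1 + s) / s ^ 2) atTop (𝓝 0) := by
    have hinv := tendsto_inv_atTop_zero (𝕜 := ℝ)
    have := hinv.mul (hinv.add_const 1)
    rw [zero_mul] at this
    refine this.congr' ?_
    filter_upwards [eventually_gt_atTop 0] with s hs
    field_simp
  refine tendsto_of_tendsto_of_tendsto_of_le_of_le tendsto_const_nhds
    (hbound.comp (tendsto_atTop_add_const_left _ _ tendsto_natCast_atTop_atTop)) (fun N => ?_)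
    (fun N => tsum_factorialSeriesTerm_le (by positivity))
  exact tsum_nonneg (factorialSeriesTerm_nonneg (by positivity))

lemma tsum_one_div_add_sq_eq_tsum_factorialSeriesTerm {t : ℝ} (ht : 0 < t) :
    ∑' k : ℕ, 1 / (t + k) ^ 2 = ∑' n, factorialSeriesTerm t n :=
  eq_of_sub_add_one_eq_of_tendsto_zero (f := fun s => ∑' k : ℕ, 1 / (s + k) ^ 2)
    (g := fun s => ∑' n, factorialSeriesTerm s n) (fun N => by
      rw [tsum_one_div_add_sq_sub_add_one (by positivity),
        tsum_factorialSeriesTerm_sub_add_one (by positivity)])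
    (tendsto_tsum_one_div_add_nat_add_sq t) (tendsto_tsum_factorialSeriesTerm_add_nat ht)

theorem stmt17 (t : ℝ) (ht : 0 < t) :
    deriv digamma t - 1 / t =
      ∑' n : ℕ+, ((n : ℕ).factorial : ℝ) /
        (((n : ℝ) + 1) * ∏ k ∈ Finset.range ((n : ℕ) + 1), (t + k)) := by
  have hzero : factorialSeriesTerm t 0 = 1 / t := by simp [factorialSeriesTerm, risingProd_zero]
  rw [(hasDerivAt_digamma ht).deriv, tsum_one_div_add_sq_eq_tsum_factorialSeriesTerm ht,
    ← tsum_zero_pnat_eq_tsum_nat (summable_factorialSeriesTerm ht), hzero, add_sub_cancel_left]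
  rfl
end

section
/- For every real t > 0, t·ψ'(t) = 1 + Σ_{n=1}^∞ n! · t /((n+1)·t(t+1)···(t+n)). -/
open Filter Finset

noncomputable def st19U (t : ℝ) (n : ℕ) : ℝ :=
  (n.factorial : ℝ) / ∏ k ∈ Finset.range (n + 1), (t + k)

lemma st19_prod_pos {t : ℝ} (ht : 0 < t) (m : ℕ) :
    0 < ∏ k ∈ Finset.range m, (t + k) :=
  Finset.prod_pos fun k _ => by positivity

lemma st19U_zero {t : ℝ} : st19U t 0 = 1 / t := by simp [st19U]

lemma st19U_pos {t : ℝ} (ht : 0 < t) (n : ℕ) : 0 < st19U t n := by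
  have h1 := st19_prod_pos ht (n + 1)
  have h2 : (0:ℝ) < n.factorial := by positivity
  unfold st19U; positivity

lemma st19U_succ {t : ℝ} (ht : 0 < t) (n : ℕ) :
    st19U t (n + 1) = st19U t n * ((n + 1) / (t + (n + 1))) := by
  have h1 := st19_prod_pos ht (n + 1)
  have h2 : (0:ℝ) < t + (n + 1) := by positivity
  unfold st19U
  rw [Nat.factorial_succ, Finset.prod_range_succ]
  push_cast
  field_simp

lemma st19U_bound {t : ℝ} (ht : 0 < t) (n : ℕ) :
    st19U t n ≤ 1 / (t * (1 + t * ∑ i ∈ Finset.range n, 1 / (i + 1 : ℝ))) := by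
  induction n with
  | zero => simp [st19U_zero]
  | succ n ih =>
    have hH : (0:ℝ) ≤ ∑ i ∈ Finset.range n, 1 / (i + 1 : ℝ) :=
      Finset.sum_nonneg fun i _ => by positivity
    set H := ∑ i ∈ Finset.range n, 1 / (i + 1 : ℝ) with hHdef
    have hsum : ∑ i ∈ Finset.range (n+1), 1 / (i + 1 : ℝ) = H + 1 / (n+1) := by
      rw [Finset.sum_range_succ]
    rw [st19U_succ ht, hsum]
    have hd1 : (0:ℝ) < t * (1 + t * H) := by positivity
    have hd2 : (0:ℝ) < t + (n + 1) := by positivity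
    have hp : (0:ℝ) < 1/(n+1:ℝ) := by positivity
    have h4 : (0:ℝ) ≤ t * (H + 1/(n+1)) := mul_nonneg ht.le (by linarith)
    have hd3 : (0:ℝ) < t * (1 + t * (H + 1/(n+1))) := mul_pos ht (by linarith)
    have step : (1 / (t * (1 + t * H))) * ((n + 1) / (t + (n + 1))) ≤
        1 / (t * (1 + t * (H + 1/(n+1)))) := by
      rw [div_mul_div_comm, one_mul, div_le_div_iff₀ (by positivity) hd3]
      have hn1 : (0:ℝ) < (n:ℝ) + 1 := by positivity
      have hexp : ((n:ℝ)+1) * (1 + t * (H + 1/(n+1))) = ((n:ℝ)+1) + ((n:ℝ)+1)*(t*H) + t := by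
        field_simp; ring
      have h5 : (0:ℝ) ≤ t*t*H := by positivity
      have key : ((n:ℝ)+1) * (1 + t * (H + 1/(n+1))) ≤ (t + (n+1)) * (1 + t * H) := by
        rw [hexp]; nlinarith
      nlinarith
    calc st19U t n * ((n + 1) / (t + (n + 1)))
        ≤ (1 / (t * (1 + t * H))) * ((n + 1) / (t + (n + 1))) := by
          apply mul_le_mul_of_nonneg_right ih; positivity
      _ ≤ _ := step

lemma st19U_tendsto {t : ℝ} (ht : 0 < t) :
    Tendsto (st19U t) atTop (nhds 0) := by
  have hb : Tendsto (fun n : ℕ => t * (1 + t * ∑ i ∈ Finset.range n, 1 / (i + 1 : ℝ)))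
      atTop atTop := by
    apply Tendsto.const_mul_atTop ht
    apply tendsto_atTop_add_const_left
    exact Tendsto.const_mul_atTop ht Real.tendsto_sum_range_one_div_nat_succ_atTop
  have h0 : Tendsto (fun n : ℕ => 1 / (t * (1 + t * ∑ i ∈ Finset.range n, 1 / (i + 1 : ℝ))))
      atTop (nhds 0) := by
    simpa [Function.comp_def, one_div] using tendsto_inv_atTop_zero.comp hb
  refine tendsto_of_tendsto_of_tendsto_of_le_of_le tendsto_const_nhds h0
    (fun n => (st19U_pos ht n).le) (fun n => st19U_bound ht n)

noncomputable def st19A (t : ℝ) (n : ℕ) : ℝ := st19U t n / (n + 1)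

lemma st19_b_nonneg {t : ℝ} (ht : 0 < t) (n : ℕ) :
    0 ≤ st19U t n - st19U t (n + 1) := by
  rw [st19U_succ ht, sub_nonneg]
  have hU := st19U_pos ht n
  have h2 : (0:ℝ) < t + (n + 1) := by positivity
  have : ((n:ℝ) + 1) / (t + (n + 1)) ≤ 1 := by
    rw [div_le_one h2]; linarith
  nlinarith

lemma st19_b_eq {t : ℝ} (ht : 0 < t) (n : ℕ) :
    st19U t n - st19U t (n + 1) = st19U t n * (t / (t + (n + 1))) := by
  rw [st19U_succ ht]
  have h2 : (0:ℝ) < t + (n + 1) := by positivity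
  field_simp
  ring

lemma st19_hasSum_b {t : ℝ} (ht : 0 < t) :
    HasSum (fun n => st19U t n - st19U t (n + 1)) (1 / t) := by
  have hnn : ∀ n, 0 ≤ st19U t n - st19U t (n + 1) := st19_b_nonneg ht
  have hps : ∀ n, ∑ i ∈ Finset.range n, (st19U t i - st19U t (i + 1))
      = st19U t 0 - st19U t n := fun n => Finset.sum_range_sub' (st19U t) n
  have hsummable : Summable (fun n => st19U t n - st19U t (n + 1)) := by
    apply summable_of_sum_range_le hnn (c := 1 / t)
    intro n
    rw [hps, st19U_zero]
    have := (st19U_pos ht n).le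
    linarith
  rw [hsummable.hasSum_iff_tendsto_nat]
  have : Tendsto (fun n => st19U t 0 - st19U t n) atTop (nhds (st19U t 0 - 0)) :=
    tendsto_const_nhds.sub (st19U_tendsto ht)
  simp only [hps]
  simpa [st19U_zero] using this

lemma st19_summable_b {t : ℝ} (ht : 0 < t) :
    Summable (fun n => st19U t n - st19U t (n + 1)) := (st19_hasSum_b ht).summable

lemma st19_tsum_b {t : ℝ} (ht : 0 < t) :
    ∑' n, (st19U t n - st19U t (n + 1)) = 1 / t := (st19_hasSum_b ht).tsum_eq

lemma st19A_nonneg {t : ℝ} (ht : 0 < t) (n : ℕ) : 0 ≤ st19A t n := by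
  have := (st19U_pos ht n).le
  unfold st19A; positivity

lemma st19A_le {t : ℝ} (ht : 0 < t) (n : ℕ) :
    st19A t n ≤ ((t + 1) / t) * (st19U t n - st19U t (n + 1)) := by
  rw [st19_b_eq ht]
  unfold st19A
  have hU := st19U_pos ht n
  have h2 : (0:ℝ) < t + (n + 1) := by positivity
  rw [div_eq_mul_one_div (st19U t n), mul_comm ((t+1)/t), mul_assoc]
  apply mul_le_mul_of_nonneg_left _ hU.le
  rw [div_mul_div_comm, div_le_div_iff₀ (by positivity) (by positivity)]
  nlinarith [mul_nonneg (mul_nonneg ht.le ht.le) (Nat.cast_nonneg n : (0:ℝ) ≤ n)]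

lemma st19_summable_A {t : ℝ} (ht : 0 < t) : Summable (st19A t) := by
  apply Summable.of_nonneg_of_le (st19A_nonneg ht) (st19A_le ht)
  exact (st19_summable_b ht).mul_left _

lemma st19_prod_succ' {t : ℝ} (n : ℕ) :
    (∏ k ∈ Finset.range (n + 2), (t + (k:ℝ)))
      = (∏ k ∈ Finset.range (n + 1), (t + 1 + (k:ℝ))) * t := by
  rw [Finset.prod_range_succ' (fun k => t + (k:ℝ)) (n + 1)]
  simp only [Nat.cast_zero, add_zero]
  congr 1
  apply Finset.prod_congr rfl
  intro k _
  push_cast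
  ring

lemma st19A_diff {t : ℝ} (ht : 0 < t) (n : ℕ) :
    st19A t n - st19A (t + 1) n = (st19U t n - st19U t (n + 1)) / t := by
  have hPn := st19_prod_pos ht (n + 1)
  have hPn2 := st19_prod_pos ht (n + 2)
  have hPn1 : 0 < ∏ k ∈ Finset.range (n + 1), (t + 1 + (k:ℝ)) := by
    apply Finset.prod_pos; intro k _; positivity
  have hrw : ∏ k ∈ Finset.range (n + 2), (t + (k:ℝ))
      = (∏ k ∈ Finset.range (n + 1), (t + (k:ℝ))) * (t + ((n:ℝ) + 1)) := by
    rw [Finset.prod_range_succ]; norm_cast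
  have hb : st19U t n - st19U t (n + 1)
      = ((n.factorial : ℝ) * t) / ∏ k ∈ Finset.range (n + 2), (t + (k:ℝ)) := by
    rw [st19_b_eq ht, hrw]
    unfold st19U
    have h2 : (0:ℝ) < t + ((n:ℝ) + 1) := by positivity
    field_simp
  rw [hb]
  unfold st19A st19U
  rw [st19_prod_succ'] at hb ⊢
  have hn1 : (0:ℝ) < (n:ℝ) + 1 := by positivity
  have hprod : ∏ k ∈ Finset.range (n + 1), (t + (k:ℝ))
      = ∏ k ∈ Finset.range (n + 1), (t + (k:ℝ)) := rfl
  have hPneq : (∏ k ∈ Finset.range (n + 1), (t + 1 + (k:ℝ))) * t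
      = (∏ k ∈ Finset.range (n + 1), (t + (k:ℝ))) * (t + ((n:ℝ) + 1)) := by
    rw [← st19_prod_succ', Finset.prod_range_succ]
    push_cast; ring
  have h2 : (0:ℝ) < t + ((n:ℝ) + 1) := by positivity
  field_simp
  linear_combination hPneq

lemma st19S_rec {t : ℝ} (ht : 0 < t) :
    ∑' n, st19A t n = 1 / t ^ 2 + ∑' n, st19A (t + 1) n := by
  have h1 := st19_summable_A ht
  have h2 := st19_summable_A (by linarith : (0:ℝ) < t + 1)
  have h3 : ∑' n, st19A t n - ∑' n, st19A (t + 1) n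
      = ∑' n, (st19A t n - st19A (t + 1) n) := (Summable.tsum_sub h1 h2).symm
  rw [tsum_congr (fun n => st19A_diff ht n), tsum_div_const, st19_tsum_b ht] at h3
  have : 1 / t / t = 1 / t ^ 2 := by field_simp
  rw [this] at h3
  linarith

lemma st19_summable_base : Summable (fun n : ℕ => 1 / ((n:ℝ) + 1) ^ 2) := by
  have h : Summable (fun n : ℕ => 1 / ((n:ℝ)) ^ 2) :=
    Real.summable_one_div_nat_pow.2 (by norm_num)
  have := (summable_nat_add_iff 1).2 h
  simpa using this

lemma st19_summable_P {t : ℝ} (ht : 0 < t) :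
    Summable (fun n : ℕ => 1 / (t + (n:ℝ)) ^ 2) := by
  refine Summable.of_nonneg_of_le (fun n => by positivity) ?_
    (st19_summable_base.mul_left (4 + 1 / t ^ 2))
  · intro n
    match n with
    | 0 =>
      have : (0:ℝ) < t ^ 2 := by positivity
      simp only [Nat.cast_zero, add_zero]
      rw [div_le_iff₀ (by positivity)]
      have : 1 / t ^ 2 * t ^ 2 = 1 := by field_simp
      nlinarith
    | (m + 1) =>
      have h1 : ((m:ℝ) + 2) / 2 ≤ t + ((m:ℕ)+1 : ℕ) := by push_cast; linarith
      have h2 : (0:ℝ) < (m:ℝ) + 2 := by positivity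
      have h3 : (0:ℝ) < t + ((m:ℕ)+1 : ℕ) := by positivity
      have h4 : (((m:ℝ) + 2) / 2) ^ 2 ≤ (t + ((m:ℕ)+1 : ℕ)) ^ 2 := by
        apply pow_le_pow_left₀ (by positivity) h1
      have h5 : 1 / (t + ((m:ℕ)+1 : ℕ)) ^ 2 ≤ 4 / ((m:ℝ) + 2) ^ 2 := by
        rw [div_le_div_iff₀ (by positivity) (by positivity)]
        nlinarith
      have h6 : (4:ℝ) / ((m:ℝ) + 2) ^ 2 ≤ (4 + 1 / t ^ 2) * (1 / ((m:ℝ) + 1 + 1) ^ 2) := by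
        have ht2 : (0:ℝ) ≤ 1 / t ^ 2 := by positivity
        rw [mul_one_div, show ((m:ℝ) + 1 + 1) = (m:ℝ) + 2 by ring]
        gcongr
        linarith
      calc 1 / (t + ((m+1 : ℕ) : ℝ)) ^ 2 ≤ 4 / ((m:ℝ) + 2) ^ 2 := by push_cast at h5 ⊢; exact h5
        _ ≤ (4 + 1/t^2) * (1 / (((m+1:ℕ):ℝ) + 1) ^ 2) := by push_cast; exact h6

lemma st19P_rec {t : ℝ} (ht : 0 < t) :
    ∑' n : ℕ, 1 / (t + (n:ℝ)) ^ 2 = 1 / t ^ 2 + ∑' n : ℕ, 1 / (t + 1 + (n:ℝ)) ^ 2 := by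
  rw [Summable.tsum_eq_zero_add (st19_summable_P ht)]
  congr 1
  · norm_num
  · apply tsum_congr; intro n; push_cast; ring_nf

lemma st19P_shift_tendsto {t : ℝ} (ht : 0 < t) :
    Tendsto (fun m : ℕ => ∑' n : ℕ, 1 / (t + (m:ℝ) + (n:ℝ)) ^ 2) atTop (nhds 0) := by
  have h := tendsto_sum_nat_add (fun n : ℕ => 1 / (t + (n:ℝ)) ^ 2)
  have heq : (fun m : ℕ => ∑' n : ℕ, 1 / (t + (m:ℝ) + (n:ℝ)) ^ 2)
      = fun m : ℕ => ∑' k : ℕ, 1 / (t + ((k + m : ℕ):ℝ)) ^ 2 := by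
    funext m
    apply tsum_congr; intro k; push_cast; ring_nf
  rw [heq]
  exact h

lemma st19_prod_ge {s : ℝ} (hs : 1 ≤ s) (n : ℕ) :
    s * ((n + 1).factorial : ℝ) ≤ ∏ k ∈ Finset.range (n + 1), (s + (k:ℝ)) := by
  induction n with
  | zero => simp
  | succ n ih =>
    rw [Finset.prod_range_succ, Nat.factorial_succ]
    have h1 : ((n:ℝ) + 2) ≤ s + ((n + 1 : ℕ):ℝ) := by push_cast; linarith
    have h2 : (0:ℝ) < ((n+1).factorial : ℝ) := by positivity
    have h3 : (0:ℝ) ≤ s * ((n+1).factorial : ℝ) := by nlinarith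
    calc s * ((((n+1) + 1) * (n+1).factorial : ℕ) : ℝ)
        = (s * ((n+1).factorial : ℝ)) * (((n:ℝ) + 2)) := by push_cast; ring
      _ ≤ (∏ k ∈ Finset.range (n + 1), (s + (k:ℝ))) * (s + ((n + 1 : ℕ):ℝ)) := by
          apply mul_le_mul ih h1 (by positivity) (le_trans h3 ih)
      _ = _ := rfl

lemma st19A_bound {s : ℝ} (hs : 1 ≤ s) (n : ℕ) :
    st19A s n ≤ 1 / s * (1 / ((n:ℝ) + 1) ^ 2) := by
  have hs0 : (0:ℝ) < s := by linarith
  have hP := st19_prod_pos hs0 (n + 1)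
  have hge := st19_prod_ge hs n
  have hfact : ((n+1).factorial : ℝ) = ((n:ℝ) + 1) * (n.factorial : ℝ) := by
    rw [Nat.factorial_succ]; push_cast; ring
  have hf : (0:ℝ) < (n.factorial : ℝ) := by positivity
  have hn1 : (0:ℝ) < (n:ℝ) + 1 := by positivity
  have e1 : st19A s n
      = (n.factorial : ℝ) / ((∏ k ∈ Finset.range (n + 1), (s + (k:ℝ))) * ((n:ℝ) + 1)) := by
    unfold st19A st19U; rw [div_div]
  have e2 : 1 / s * (1 / ((n:ℝ) + 1) ^ 2) = 1 / (s * ((n:ℝ) + 1) ^ 2) := by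
    rw [div_mul_div_comm, one_mul]
  rw [e1, e2, div_le_div_iff₀ (by positivity) (by positivity), one_mul]
  calc (n.factorial : ℝ) * (s * ((n:ℝ)+1)^2)
      = (s * (((n:ℝ) + 1) * (n.factorial : ℝ))) * ((n:ℝ) + 1) := by ring
    _ = (s * ((n+1).factorial : ℝ)) * ((n:ℝ) + 1) := by rw [hfact]
    _ ≤ (∏ k ∈ Finset.range (n + 1), (s + (k:ℝ))) * ((n:ℝ) + 1) :=
        mul_le_mul_of_nonneg_right hge hn1.le

lemma st19S_shift_tendsto {t : ℝ} (ht : 0 < t) :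
    Tendsto (fun m : ℕ => ∑' n, st19A (t + (m:ℝ)) n) atTop (nhds 0) := by
  set K := ∑' n : ℕ, 1 / ((n:ℝ) + 1) ^ 2 with hK
  have hKpos : 0 ≤ K := tsum_nonneg fun n => by positivity
  have hup : Tendsto (fun m : ℕ => 1 / (t + (m:ℝ)) * K) atTop (nhds 0) := by
    have h1 : Tendsto (fun m : ℕ => t + (m:ℝ)) atTop atTop :=
      tendsto_atTop_add_const_left _ _ tendsto_natCast_atTop_atTop
    have h2 : Tendsto (fun m : ℕ => 1 / (t + (m:ℝ))) atTop (nhds 0) := by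
      simpa [one_div, Pi.inv_def] using h1.inv_tendsto_atTop
    simpa using h2.mul_const K
  apply tendsto_of_tendsto_of_tendsto_of_le_of_le' tendsto_const_nhds hup
  · filter_upwards with m
    exact tsum_nonneg fun n => st19A_nonneg (by positivity) n
  · filter_upwards [eventually_ge_atTop 1] with m hm
    have hs1 : (1:ℝ) ≤ t + (m:ℝ) := by
      have : (1:ℝ) ≤ (m:ℝ) := by exact_mod_cast hm
      linarith
    have hs0 : (0:ℝ) < t + (m:ℝ) := by linarith
    calc ∑' n, st19A (t + (m:ℝ)) n
        ≤ ∑' n : ℕ, 1 / (t + (m:ℝ)) * (1 / ((n:ℝ) + 1) ^ 2) := by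
          apply Summable.tsum_le_tsum (fun n => st19A_bound hs1 n) (st19_summable_A hs0)
          exact st19_summable_base.mul_left _
      _ = 1 / (t + (m:ℝ)) * K := by rw [hK, tsum_mul_left]

lemma st19_shift_eq {t : ℝ} (ht : 0 < t) (m : ℕ) :
    (∑' n : ℕ, 1 / (t + (n:ℝ)) ^ 2) - ∑' n, st19A t n
      = (∑' n : ℕ, 1 / (t + (m:ℝ) + (n:ℝ)) ^ 2) - ∑' n, st19A (t + (m:ℝ)) n := by
  induction m with
  | zero => simp
  | succ m ih =>
    rw [ih]
    have hs : (0:ℝ) < t + (m:ℝ) := by positivity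
    have h1 := st19P_rec hs
    have h2 := st19S_rec hs
    have hc : t + ((m:ℕ) + 1 : ℕ) = t + (m:ℝ) + 1 := by push_cast; ring
    rw [hc]
    linarith

lemma st19_main {t : ℝ} (ht : 0 < t) :
    ∑' n : ℕ, 1 / (t + (n:ℝ)) ^ 2 = ∑' n, st19A t n := by
  have hconst : Tendsto (fun m : ℕ => (∑' n : ℕ, 1 / (t + (m:ℝ) + (n:ℝ)) ^ 2)
      - ∑' n, st19A (t + (m:ℝ)) n) atTop
      (nhds ((∑' n : ℕ, 1 / (t + (n:ℝ)) ^ 2) - ∑' n, st19A t n)) := by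
    have : (fun m : ℕ => (∑' n : ℕ, 1 / (t + (m:ℝ) + (n:ℝ)) ^ 2)
        - ∑' n, st19A (t + (m:ℝ)) n)
        = fun _ : ℕ => (∑' n : ℕ, 1 / (t + (n:ℝ)) ^ 2) - ∑' n, st19A t n := by
      funext m; exact (st19_shift_eq ht m).symm
    rw [this]; exact tendsto_const_nhds
  have hzero : Tendsto (fun m : ℕ => (∑' n : ℕ, 1 / (t + (m:ℝ) + (n:ℝ)) ^ 2)
      - ∑' n, st19A (t + (m:ℝ)) n) atTop (nhds 0) := by
    simpa using (st19P_shift_tendsto ht).sub (st19S_shift_tendsto ht)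
  have := tendsto_nhds_unique hconst hzero
  linarith

theorem stmt19 (t : ℝ) (ht : 0 < t) :
    t * ∑' n : ℕ, 1 / (t + n) ^ 2 =
      1 + ∑' n : ℕ+, ((n : ℕ).factorial : ℝ) * t /
        (((n : ℝ) + 1) * ∏ k ∈ Finset.range ((n : ℕ) + 1), (t + k)) := by
  have hg : ∀ n : ℕ+, ((n : ℕ).factorial : ℝ) * t /
      (((n : ℝ) + 1) * ∏ k ∈ Finset.range ((n : ℕ) + 1), (t + k))
      = t * st19A t (n : ℕ) := by
    intro n
    have hP := st19_prod_pos ht ((n : ℕ) + 1)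
    have hc : ((n : ℝ)) = (((n : ℕ) : ℕ) : ℝ) := by norm_cast
    unfold st19A st19U
    rw [hc]
    field_simp
  have hre : (∑' n : ℕ+, ((n : ℕ).factorial : ℝ) * t /
      (((n : ℝ) + 1) * ∏ k ∈ Finset.range ((n : ℕ) + 1), (t + k)))
      = ∑' k : ℕ, t * st19A t (k + 1) := by
    rw [tsum_congr hg, ← Equiv.tsum_eq Equiv.pnatEquivNat.symm (fun n : ℕ+ => t * st19A t (n:ℕ))]
    apply tsum_congr; intro k
    have hk : ((Equiv.pnatEquivNat.symm k : ℕ+) : ℕ) = k + 1 := by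
      simp [Equiv.pnatEquivNat]
    rw [hk]
  have hsummable : Summable (fun n => t * st19A t n) := (st19_summable_A ht).mul_left t
  have hzero : t * st19A t 0 = 1 := by
    unfold st19A
    rw [st19U_zero]
    field_simp
    simp
  rw [st19_main ht, ← (st19_summable_A ht).tsum_mul_left t, Summable.tsum_eq_zero_add hsummable, hzero, hre]
end
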